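/- arXiv:2305.00825 — 6 statements merged into one kernel-verified Lean document; each statement's English description precedes it below -/
import Mathlib

section
/- Let S₁, S₂ ⊆ ℝ be finite sets with 0 ∈ S₁ ∩ S₂, |S₁| = n and |S₂| = m, and let Γ = S₁ × S₂ ⊆ ℝ². If k is a positive integer with n ≥ (k−1)(m−1) + 1, then cov_k(Γ) = k(n−1) + (m−1). -/
open scoped Classical

/-- An affine line in `ℝ²`, given by the equation `a * x + b * y = c` with `(a, b) ≠ (0, 0)`. -/
structure Line2 where
  a : ℝ
  b : ℝ
  c : ℝ
  nondeg : a ≠ 0 ∨ b ≠ 0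

/-- Membership of a point on a line. -/
def Line2.Mem (l : Line2) (p : ℝ × ℝ) : Prop :=
  l.a * p.1 + l.b * p.2 = l.c

/-- `L` is a `k`-cover of `Γ`: a multiset of lines, none through the origin, such that
every point of `Γ` other than the origin lies on at least `k` lines (with multiplicity). -/
def IsKCover (Γ : Set (ℝ × ℝ)) (k : ℕ) (L : Multiset Line2) : Prop :=
  (∀ l ∈ L, ¬ l.Mem (0, 0)) ∧
    ∀ p ∈ Γ, p ≠ (0, 0) → k ≤ (L.filter (fun l => l.Mem p)).card

/-- The minimum cardinality of a `k`-cover of `Γ`. -/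
noncomputable def cov (Γ : Set (ℝ × ℝ)) (k : ℕ) : ℕ :=
  sInf {m | ∃ L : Multiset Line2, IsKCover Γ k L ∧ Multiset.card L = m}


namespace CovAux
open Polynomial

def totalBound (d : ℕ) (F : Polynomial (Polynomial ℝ)) : Prop :=
  ∀ i j : ℕ, d < i + j → (F.coeff j).coeff i = 0

lemma totalBound.mono {d e : ℕ} {F : Polynomial (Polynomial ℝ)}
    (h : totalBound d F) (hde : d ≤ e) : totalBound e F :=
  fun i j hij => h i j (lt_of_le_of_lt hde hij)

lemma totalBound_zero (d : ℕ) : totalBound d 0 := by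
  intro i j _; simp

lemma totalBound_one : totalBound 0 1 := by
  intro i j hij
  rcases Nat.eq_zero_or_pos j with hj | hj
  · subst hj
    rw [Polynomial.coeff_one, if_pos rfl, Polynomial.coeff_one, if_neg (by omega)]
  · rw [Polynomial.coeff_one, if_neg (by omega)]
    simp

lemma totalBound_mul {d e : ℕ} {F G : Polynomial (Polynomial ℝ)}
    (hF : totalBound d F) (hG : totalBound e G) :
    totalBound (d + e) (F * G) := by
  intro i j hij
  rw [Polynomial.coeff_mul, Polynomial.finset_sum_coeff]
  apply Finset.sum_eq_zero
  rintro ⟨j1, j2⟩ hj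
  rw [Finset.HasAntidiagonal.mem_antidiagonal] at hj
  rw [Polynomial.coeff_mul]
  apply Finset.sum_eq_zero
  rintro ⟨i1, i2⟩ hi
  rw [Finset.HasAntidiagonal.mem_antidiagonal] at hi
  simp only at hj hi ⊢
  by_cases hd : d < i1 + j1
  · rw [hF i1 j1 hd, zero_mul]
  · have : e < i2 + j2 := by omega
    rw [hG i2 j2 this, mul_zero]

lemma totalBound_prod {M : Multiset (Polynomial (Polynomial ℝ))}
    (h : ∀ F ∈ M, totalBound 1 F) :
    totalBound (Multiset.card M) M.prod := by
  induction M using Multiset.induction with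
  | empty => simpa using totalBound_one.mono (by omega)
  | cons a s ih =>
    rw [Multiset.prod_cons, Multiset.card_cons, add_comm (Multiset.card s) 1]
    exact totalBound_mul (h a (Multiset.mem_cons_self a s))
      (ih fun F hF => h F (Multiset.mem_cons_of_mem hF))


lemma division (g : Polynomial ℝ) (hg : g.Monic) (hdeg : 0 < g.natDegree) {d : ℕ} :
    ∀ (N : ℕ) (F : Polynomial (Polynomial ℝ)), F.natDegree ≤ N → totalBound d F →
    ∃ D R, F = g.map (Polynomial.C : ℝ →+* Polynomial ℝ) * D + R ∧
      R.degree < (g.map (Polynomial.C : ℝ →+* Polynomial ℝ)).degree ∧ totalBound d R := by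
  set Gm : Polynomial (Polynomial ℝ) := g.map (Polynomial.C : ℝ →+* Polynomial ℝ) with hGmdef
  have hGm : Gm.Monic := hg.map _
  have hGmdeg : Gm.natDegree = g.natDegree := hg.natDegree_map _
  intro N
  induction N with
  | zero =>
    intro F hFN hFb
    by_cases hF : F.degree < Gm.degree
    · exact ⟨0, F, by ring, hF, hFb⟩
    · exfalso
      have h1 : Gm.natDegree ≤ F.natDegree := natDegree_le_natDegree (not_lt.mp hF)
      omega
  | succ N ih =>
    intro F hFN hFb
    by_cases hF : F.degree < Gm.degree
    · exact ⟨0, F, by ring, hF, hFb⟩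
    · have h1 : Gm.natDegree ≤ F.natDegree := natDegree_le_natDegree (not_lt.mp hF)
      set dF := F.natDegree with hdF
      set gn := Gm.natDegree with hgn
      set c := F.coeff dF with hc
      set e := dF - gn with he
      have hegn : e + gn = dF := by omega
      set S := Polynomial.C c * Gm * X ^ e with hS
      have hScoeff : ∀ j, S.coeff j =
          if e ≤ j then c * Gm.coeff (j - e) else 0 := by
        intro j
        rw [hS, Polynomial.coeff_mul_X_pow', Polynomial.coeff_C_mul]
      set F' := F - S with hF'
      have hF'coeff : ∀ j, dF ≤ j → F'.coeff j = 0 := by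
        intro j hj
        rw [hF', Polynomial.coeff_sub, hScoeff j]
        rcases eq_or_lt_of_le hj with hj' | hj'
        · rw [← hj', if_pos (by omega)]
          have : dF - e = gn := by omega
          rw [this, hGm.coeff_natDegree, mul_one, ← hc, sub_self]
        · rw [coeff_eq_zero_of_natDegree_lt hj', if_pos (by omega),
            coeff_eq_zero_of_natDegree_lt (by omega : Gm.natDegree < j - e), mul_zero, sub_zero]
      have hdegF' : F'.degree < (dF : WithBot ℕ) :=
        (Polynomial.degree_lt_iff_coeff_zero _ _).mpr
          (fun m hm => hF'coeff m (by exact_mod_cast hm))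
      have hndF' : F'.natDegree ≤ N := by
        by_cases h0 : F' = 0
        · simp [h0]
        · have := (natDegree_lt_iff_degree_lt h0).mpr hdegF'
          omega
      have hbS : ∀ i j : ℕ, d < i + j → (S.coeff j).coeff i = 0 := by
        intro i j hij
        rw [hScoeff j]
        by_cases hj : e ≤ j
        · rw [if_pos hj]
          by_cases hj2 : j ≤ dF
          · rw [hGmdef, Polynomial.coeff_map, mul_comm, Polynomial.coeff_C_mul,
              hFb i dF (by omega), mul_zero]
          · rw [coeff_eq_zero_of_natDegree_lt (by omega : Gm.natDegree < j - e), mul_zero]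
            simp
        · rw [if_neg hj]; simp
      have hbF' : totalBound d F' := by
        intro i j hij
        rw [hF', Polynomial.coeff_sub, Polynomial.coeff_sub, hFb i j hij, hbS i j hij, sub_self]
      obtain ⟨D', R, hFeq, hdegR, hbR⟩ := ih F' hndF' hbF'
      refine ⟨Polynomial.C c * X ^ e + D', R, ?_, hdegR, hbR⟩
      have : F = S + F' := by rw [hF']; ring
      rw [this, hFeq, hS]
      ring


/-- the factor polynomial of a line, in `ℝ[Y][X]`. -/
noncomputable def factor (l : Line2) : Polynomial (Polynomial ℝ) :=
  Polynomial.C (Polynomial.C l.a) * Polynomial.X +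
    Polynomial.C (Polynomial.C l.b * Polynomial.X - Polynomial.C l.c)

/-- evaluation `y := t`, as a ring hom `ℝ[Y][X] →+* ℝ[X]`. -/
noncomputable def Ψ (t : ℝ) : Polynomial (Polynomial ℝ) →+* Polynomial ℝ :=
  Polynomial.mapRingHom (Polynomial.evalRingHom t)

lemma Ψ_factor (t : ℝ) (l : Line2) :
    Ψ t (factor l) = Polynomial.C l.a * Polynomial.X + Polynomial.C (l.b * t - l.c) := by
  simp [Ψ, factor, Polynomial.coe_mapRingHom]

lemma Ψ_factor_of_mem {t s : ℝ} {l : Line2} (h : l.Mem (s, t)) :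
    Ψ t (factor l) = Polynomial.C l.a * (Polynomial.X - Polynomial.C s) := by
  rw [Ψ_factor]
  have hm : l.a * s + l.b * t = l.c := h
  have : l.b * t - l.c = -(l.a * s) := by linarith
  rw [this, mul_sub, ← Polynomial.C_mul, Polynomial.C_neg]
  ring

lemma totalBound_factor (l : Line2) : totalBound 1 (factor l) := by
  intro i j hij
  match j with
  | 0 =>
    have h1 : (1:ℕ) ≠ i := by omega
    have h2 : i ≠ 0 := by omega
    simp [factor, Polynomial.coeff_X, Polynomial.coeff_C, h1, h2]
  | 1 =>
    have h2 : i ≠ 0 := by omega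
    simp [factor, Polynomial.coeff_X, Polynomial.coeff_C, h2]
  | (j+2) =>
    have h1 : (1:ℕ) ≠ j + 2 := by omega
    have h2 : j + 2 ≠ 0 := by omega
    simp [factor, Polynomial.coeff_X, Polynomial.coeff_C, h1, h2]

theorem lower_bound (S₁ S₂ : Finset ℝ) (k : ℕ) (L : Multiset Line2)
    (h0₁ : (0 : ℝ) ∈ S₁) (h0₂ : (0 : ℝ) ∈ S₂) (hk : 1 ≤ k)
    (hL : IsKCover (↑(S₁ ×ˢ S₂)) k L) :
    k * (S₁.card - 1) + (S₂.card - 1) ≤ Multiset.card L := by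
  obtain ⟨hO, hcov⟩ := hL
  -- basic facts about lines in the cover
  have hc_ne : ∀ l ∈ L, l.c ≠ 0 := by
    intro l hl hc
    exact hO l hl (by simp [Line2.Mem, hc])
  -- the non-horizontal lines
  set F : Multiset Line2 := L.filter (fun l => ¬ l.a = 0) with hF
  set A : ℕ := Multiset.card F with hA
  set Hn : ℕ := Multiset.card (L.filter (fun l => l.a = 0)) with hHn
  have hcardL : Multiset.card L = Hn + A := by
    rw [hHn, hA, hF, ← Multiset.card_add, Multiset.filter_add_not]
  -- the product polynomial
  set Q : Polynomial (Polynomial ℝ) := (F.map factor).prod with hQ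
  have hQb : totalBound A Q := by
    have := totalBound_prod (M := F.map factor) (by
      intro G hG
      obtain ⟨l, _, rfl⟩ := Multiset.mem_map.mp hG
      exact totalBound_factor l)
    rwa [Multiset.card_map] at this
  -- membership in the grid
  have hgrid : ∀ s t : ℝ, s ∈ S₁ → t ∈ S₂ → ((s, t) : ℝ × ℝ) ∈ (↑(S₁ ×ˢ S₂) : Set (ℝ × ℝ)) := by
    intro s t hs ht
    simp [Finset.mem_product, hs, ht]
  -- key divisibility: if no horizontal line of `L` passes through row `t`
  -- at the point `(s,t)`, then `(X - C s)^k ∣ Ψ t Q`.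
  have hdvd : ∀ s t : ℝ, s ∈ S₁ → t ∈ S₂ → (s, t) ≠ ((0 : ℝ), (0 : ℝ)) →
      (∀ l ∈ L, l.a = 0 → ¬ l.Mem (s, t)) →
      (Polynomial.X - Polynomial.C s) ^ k ∣ Ψ t Q := by
    intro s t hs ht hne hnoh
    set M : Multiset Line2 := F.filter (fun l => l.Mem (s, t)) with hM
    have hMk : k ≤ Multiset.card M := by
      have h1 : L.filter (fun l => l.Mem (s, t)) =
          L.filter (fun l => l.Mem (s, t) ∧ ¬ l.a = 0) := by
        apply Multiset.filter_congr
        intro l hl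
        constructor
        · intro hmem
          refine ⟨hmem, fun ha => hnoh l hl ha hmem⟩
        · exact fun h => h.1
      have h2 := hcov (s, t) (hgrid s t hs ht) hne
      rw [h1] at h2
      rw [hM, hF, Multiset.filter_filter]
      exact h2
    have hMle : M ≤ F := Multiset.filter_le _ F
    have hQmap : Ψ t Q = (F.map (fun l => Ψ t (factor l))).prod := by
      rw [hQ, map_multiset_prod, Multiset.map_map]
      rfl
    have hdvd1 : (M.map (fun l => Ψ t (factor l))).prod ∣ Ψ t Q := by
      rw [hQmap]
      exact Multiset.prod_dvd_prod_of_le (Multiset.map_le_map hMle)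
    have hMmap : (M.map (fun l => Ψ t (factor l))).prod =
        (M.map (fun l => Polynomial.C l.a)).prod *
          (Polynomial.X - Polynomial.C s) ^ Multiset.card M := by
      have : M.map (fun l => Ψ t (factor l)) =
          M.map (fun l => Polynomial.C l.a * (Polynomial.X - Polynomial.C s)) := by
        apply Multiset.map_congr rfl
        intro l hl
        rw [hM] at hl
        exact Ψ_factor_of_mem (Multiset.mem_filter.mp hl).2
      rw [this, Multiset.prod_map_mul]
      congr 1
      rw [Multiset.map_const', Multiset.prod_replicate]
    refine dvd_trans ?_ hdvd1
    rw [hMmap]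
    exact dvd_mul_of_dvd_right (pow_dvd_pow _ hMk) _
  -- the grid polynomials
  set g1 : Polynomial ℝ := ∏ s ∈ S₁.erase 0, (Polynomial.X - Polynomial.C s) with hg1
  set g : Polynomial ℝ := ∏ s ∈ S₁, (Polynomial.X - Polynomial.C s) with hg
  have hg1monic : g1.Monic := monic_prod_of_monic _ _ (fun s _ => monic_X_sub_C s)
  have hgmonic : g.Monic := monic_prod_of_monic _ _ (fun s _ => monic_X_sub_C s)
  have hg1deg : g1.natDegree = S₁.card - 1 := by
    rw [hg1, natDegree_prod_of_monic _ _ (fun s _ => monic_X_sub_C s)]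
    simp [Finset.card_erase_of_mem h0₁]
  have hgdeg : g.natDegree = S₁.card := by
    rw [hg, natDegree_prod_of_monic _ _ (fun s _ => monic_X_sub_C s)]
    simp
  have hg1dvdg : g1 ∣ g := by
    rw [hg, ← Finset.mul_prod_erase _ _ h0₁]
    exact Dvd.intro_left _ rfl
  have hn1 : 1 ≤ S₁.card := Finset.card_pos.mpr ⟨0, h0₁⟩
  -- pairwise coprime product divisibility
  have hproddvd : ∀ (T : Finset ℝ) (p : Polynomial ℝ),
      (∀ s ∈ T, (Polynomial.X - Polynomial.C s) ^ k ∣ p) →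
      (∏ s ∈ T, (Polynomial.X - Polynomial.C s)) ^ k ∣ p := by
    intro T p hall
    rw [← Finset.prod_pow]
    apply Finset.prod_dvd_of_coprime _ hall
    intro s hs s' hs' hss
    exact (Polynomial.isCoprime_X_sub_C_of_isUnit_sub
      ((sub_ne_zero.mpr hss).isUnit)).pow
  -- division of Q by (map C g)^k -- i.e. by map C (g^k)
  have hgkmonic : (g ^ k).Monic := hgmonic.pow k
  have hgkdeg : 0 < (g ^ k).natDegree := by
    rw [hgmonic.natDegree_pow, hgdeg]
    positivity
  obtain ⟨D, R, hQeq, hRdeg, hRb⟩ :=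
    division (g ^ k) hgkmonic hgkdeg Q.natDegree Q le_rfl hQb
  set Gm : Polynomial (Polynomial ℝ) := (g ^ k).map (Polynomial.C : ℝ →+* Polynomial ℝ)
    with hGm
  have hΨGm : ∀ t : ℝ, Ψ t Gm = g ^ k := by
    intro t
    show ((g ^ k).map (Polynomial.C : ℝ →+* Polynomial ℝ)).map (Polynomial.evalRingHom t) = g ^ k
    rw [Polynomial.map_map]
    have : (Polynomial.evalRingHom t).comp (Polynomial.C : ℝ →+* Polynomial ℝ) =
        RingHom.id ℝ := by
      ext x
      simp
    rw [this, Polynomial.map_id]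
  -- good and bad rows
  set horizRow : ℝ → Prop := fun t => ∃ l ∈ L, l.a = 0 ∧ l.Mem (0, t) with hhor
  set goodR : Finset ℝ := (S₂.erase 0).filter (fun t => ¬ horizRow t) with hgoodR
  set badR : Finset ℝ := (S₂.erase 0).filter horizRow with hbadR
  have hcardrows : badR.card + goodR.card = S₂.card - 1 := by
    rw [hbadR, hgoodR, Finset.card_filter_add_card_filter_not,
      Finset.card_erase_of_mem h0₂]
  -- bad rows are at most the number of horizontal lines
  have hbadle : badR.card ≤ Hn := by
    classical
    set pick : ℝ → Line2 := fun t =>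
      if h : ∃ l ∈ L, l.a = 0 ∧ l.Mem (0, t) then h.choose else ⟨1, 0, 1, Or.inl one_ne_zero⟩
      with hpick
    have hpickspec : ∀ t ∈ badR, pick t ∈ L ∧ (pick t).a = 0 ∧ (pick t).Mem (0, t) := by
      intro t ht
      have h : horizRow t := (Finset.mem_filter.mp ht).2
      rw [hpick]
      simp only [dif_pos (show ∃ l ∈ L, l.a = 0 ∧ l.Mem (0, t) from h)]
      exact h.choose_spec
    have : badR.card ≤ ((L.filter (fun l => l.a = 0)).toFinset).card := by
      apply Finset.card_le_card_of_injOn pick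
      · intro t ht
        rw [Finset.mem_coe, Multiset.mem_toFinset, Multiset.mem_filter]
        exact ⟨(hpickspec t ht).1, (hpickspec t ht).2.1⟩
      · intro t ht t' ht' heq
        obtain ⟨_, ha, hmem⟩ := hpickspec t ht
        obtain ⟨_, ha', hmem'⟩ := hpickspec t' ht'
        have hb : (pick t).b ≠ 0 := (pick t).nondeg.resolve_left (fun h => h ha)
        have e1 : (pick t).b * t = (pick t).c := by
          simpa [Line2.Mem, ha] using hmem
        have e2 : (pick t).b * t' = (pick t).c := by
          rw [heq]
          simpa [Line2.Mem, ha'] using hmem'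
        exact mul_left_cancel₀ hb (e1.trans e2.symm)
    exact le_trans this (le_trans (Multiset.toFinset_card_le _) le_rfl)
  -- for good rows, Ψ t R = 0
  have hgoodzero : ∀ t ∈ goodR, Ψ t R = 0 := by
    intro t ht
    obtain ⟨ht2, hngood⟩ := Finset.mem_filter.mp ht
    have ht0 : t ≠ 0 := Finset.ne_of_mem_erase ht2
    have htS : t ∈ S₂ := Finset.mem_of_mem_erase ht2
    have hnoh : ∀ s : ℝ, ∀ l ∈ L, l.a = 0 → ¬ l.Mem (s, t) := by
      intro s l hl ha hmem
      apply hngood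
      refine ⟨l, hl, ha, ?_⟩
      have : l.a * s + l.b * t = l.c := hmem
      show l.a * 0 + l.b * t = l.c
      rw [ha] at this ⊢
      simpa using this
    have hdvdall : g ^ k ∣ Ψ t Q := by
      apply hproddvd
      intro s hs
      exact hdvd s t hs htS (by simp [Prod.ext_iff, ht0]) (hnoh s)
    have hΨR : Ψ t R = Ψ t Q - g ^ k * Ψ t D := by
      rw [hQeq]
      simp only [map_add, map_mul]
      rw [hΨGm t]
      ring
    have hdvdR : g ^ k ∣ Ψ t R := by
      rw [hΨR]
      exact dvd_sub hdvdall (Dvd.intro _ rfl)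
    apply Polynomial.eq_zero_of_dvd_of_degree_lt hdvdR
    calc (Ψ t R).degree ≤ R.degree := Polynomial.degree_map_le
      _ < Gm.degree := hRdeg
      _ = (g ^ k).degree := hgkmonic.degree_map _
  -- row zero analysis
  have hnoh0 : ∀ s : ℝ, s ≠ 0 → ∀ l ∈ L, l.a = 0 → ¬ l.Mem (s, (0:ℝ)) := by
    intro s hs l hl ha hmem
    apply hc_ne l hl
    have : l.a * s + l.b * 0 = l.c := hmem
    rw [ha] at this
    simpa using this.symm
  have hdvd0 : g1 ^ k ∣ Ψ 0 Q := by
    apply hproddvd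
    intro s hs
    have hs0 : s ≠ 0 := Finset.ne_of_mem_erase hs
    exact hdvd s 0 (Finset.mem_of_mem_erase hs) h0₂
      (by simp [Prod.ext_iff, hs0]) (hnoh0 s hs0)
  have hΨ0R : Ψ 0 R = Ψ 0 Q - g ^ k * Ψ 0 D := by
    rw [hQeq]
    simp only [map_add, map_mul]
    rw [hΨGm 0]
    ring
  set r₀ : Polynomial ℝ := Ψ 0 R with hr₀
  have hdvdr₀ : g1 ^ k ∣ r₀ := by
    rw [hΨ0R]
    exact dvd_sub hdvd0 (dvd_mul_of_dvd_left (pow_dvd_pow_of_dvd hg1dvdg k) _)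
  -- r₀ is nonzero: evaluate everything at (0,0)
  have heval : Polynomial.eval 0 (Ψ 0 Q) ≠ 0 := by
    have : Polynomial.eval 0 (Ψ 0 Q) =
        ((F.map (fun l => Polynomial.eval 0 (Ψ 0 (factor l))))).prod := by
      calc Polynomial.eval 0 (Ψ 0 Q)
          = ((F.map factor).map (fun p => Polynomial.eval 0 (Ψ 0 p))).prod := by
            rw [hQ]
            exact map_multiset_prod ((Polynomial.evalRingHom (0:ℝ)).comp (Ψ 0)) (F.map factor)
        _ = _ := by rw [Multiset.map_map]; rfl
    rw [this]
    apply Multiset.prod_ne_zero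
    rw [Multiset.mem_map]
    rintro ⟨l, hl, hzero⟩
    rw [Ψ_factor] at hzero
    simp only [Polynomial.eval_add, Polynomial.eval_mul, Polynomial.eval_C,
      Polynomial.eval_X, mul_zero, zero_add] at hzero
    have : l.c ≠ 0 := hc_ne l (Multiset.mem_of_mem_filter hl)
    apply this
    linarith [hzero]
  have hr₀ne : r₀ ≠ 0 := by
    intro h0
    apply heval
    have hgeval : Polynomial.eval 0 g = 0 := by
      rw [hg, Polynomial.eval_prod]
      apply Finset.prod_eq_zero h0₁
      simp
    have := hΨ0R
    rw [h0] at this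
    have h2 : Ψ 0 Q = g ^ k * Ψ 0 D := by linear_combination -this
    rw [h2]
    rw [Polynomial.eval_mul, Polynomial.eval_pow, hgeval]
    rw [zero_pow (by omega : k ≠ 0)]
    ring
  set j₀ : ℕ := r₀.natDegree with hj₀def
  have hj₀ : k * (S₁.card - 1) ≤ j₀ := by
    have := Polynomial.natDegree_le_of_dvd hdvdr₀ hr₀ne
    rw [hg1monic.natDegree_pow, hg1deg] at this
    exact this
  -- the coefficient polynomial
  set c : Polynomial ℝ := R.coeff j₀ with hcdef
  have hceval0 : c.eval 0 = r₀.coeff j₀ := by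
    have h2 : r₀ = R.map (Polynomial.evalRingHom 0) := rfl
    rw [h2, Polynomial.coeff_map]
    rfl
  have hcne : c ≠ 0 := by
    intro h0
    have : r₀.coeff j₀ ≠ 0 := by
      rw [hj₀def]
      exact Polynomial.leadingCoeff_ne_zero.mpr hr₀ne
    apply this
    rw [← hceval0, h0]
    simp
  have hcroots : ∀ t ∈ goodR, c.eval t = 0 := by
    intro t ht
    have := hgoodzero t ht
    have h2 : (Ψ t R).coeff j₀ = 0 := by rw [this]; simp
    have h3 : (R.map (Polynomial.evalRingHom t)).coeff j₀ = 0 := h2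
    rw [Polynomial.coeff_map] at h3
    exact h3
  have hrle : goodR.card ≤ c.natDegree := by
    have hsub : goodR ⊆ c.roots.toFinset := by
      intro t ht
      rw [Multiset.mem_toFinset, Polynomial.mem_roots hcne]
      exact hcroots t ht
    calc goodR.card ≤ c.roots.toFinset.card := Finset.card_le_card hsub
      _ ≤ Multiset.card c.roots := Multiset.toFinset_card_le _
      _ ≤ c.natDegree := Polynomial.card_roots' c
  -- final degree count
  have hfinal : c.natDegree + j₀ ≤ A := by
    by_contra hlt
    push_neg at hlt
    have := hRb c.natDegree j₀ hlt
    rw [← hcdef] at this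
    exact (Polynomial.leadingCoeff_ne_zero.mpr hcne) this
  omega


/-- vertical line `x = s`. -/
def vert (s : ℝ) : Line2 := ⟨1, 0, s, Or.inl one_ne_zero⟩

/-- horizontal line `y = t`. -/
def horiz (t : ℝ) : Line2 := ⟨0, 1, t, Or.inr one_ne_zero⟩

/-- the line through `(s,0)` and `(0,t)` (for `t ≠ 0`). -/
noncomputable def diag (s t : ℝ) : Line2 :=
  if h : t = 0 then ⟨1, 0, 1, Or.inl one_ne_zero⟩ else ⟨t, s, s * t, Or.inl h⟩

theorem exists_cover (S₁ S₂ : Finset ℝ) (k : ℕ)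
    (h0₁ : (0 : ℝ) ∈ S₁) (h0₂ : (0 : ℝ) ∈ S₂) (hk : 1 ≤ k)
    (hnm : (k - 1) * (S₂.card - 1) + 1 ≤ S₁.card) :
    ∃ L, IsKCover (↑(S₁ ×ˢ S₂)) k L ∧
      Multiset.card L = k * (S₁.card - 1) + (S₂.card - 1) := by
  classical
  set n := S₁.card with hn
  set m := S₂.card with hm
  set E₁ : Finset ℝ := S₁.erase 0 with hE₁
  set E₂ : Finset ℝ := S₂.erase 0 with hE₂
  have hE₁card : E₁.card = n - 1 := by rw [hE₁, Finset.card_erase_of_mem h0₁]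
  have hE₂card : E₂.card = m - 1 := by rw [hE₂, Finset.card_erase_of_mem h0₂]
  have hn1 : 1 ≤ n := Finset.card_pos.mpr ⟨0, h0₁⟩
  have hm1 : 1 ≤ m := Finset.card_pos.mpr ⟨0, h0₂⟩
  set T : Finset (ℝ × ℕ) := E₂ ×ˢ Finset.range (k - 1) with hT
  have hTcard : T.card = (m - 1) * (k - 1) := by
    rw [hT, Finset.card_product, Finset.card_range, hE₂card]
  have hTle : T.card ≤ E₁.card := by
    rw [hTcard, hE₁card, mul_comm]
    omega
  obtain ⟨U, hUsub, hUcard⟩ := Finset.exists_subset_card_eq hTle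
  have hUT : U.card = T.card := hUcard
  set e : {x // x ∈ T} ≃ {x // x ∈ U} :=
    Fintype.equivOfCardEq (by rw [Fintype.card_coe, Fintype.card_coe, hUT]) with he
  set gfun : ℝ × ℕ → ℝ := fun p => if h : p ∈ T then (e ⟨p, h⟩ : ℝ) else 0 with hgfun
  have hgmem : ∀ p ∈ T, gfun p ∈ U := by
    intro p hp
    rw [hgfun]
    simp only [dif_pos hp]
    exact (e ⟨p, hp⟩).2
  have hgsurj : ∀ u ∈ U, ∃ p ∈ T, gfun p = u := by
    intro u hu
    refine ⟨(e.symm ⟨u, hu⟩ : ℝ × ℕ), (e.symm ⟨u, hu⟩).2, ?_⟩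
    rw [hgfun]
    simp only [dif_pos (e.symm ⟨u, hu⟩).2]
    congr 1
    simp
  -- the multisets of lines
  set cnt : ℝ → ℕ := fun s => if s ∈ U then k - 1 else k with hcnt
  set Hm : Multiset Line2 := E₂.val.map horiz with hHm
  set Vm : Multiset Line2 := E₁.val.bind (fun s => Multiset.replicate (cnt s) (vert s))
    with hVm
  set Dm : Multiset Line2 := T.val.map (fun p => diag (gfun p) p.1) with hDm
  set L : Multiset Line2 := Hm + Vm + Dm with hLdef
  -- cardinalities
  have hHmcard : Multiset.card Hm = m - 1 := by
    rw [hHm, Multiset.card_map, ← Finset.card_def, hE₂card]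
  have hVmcard : Multiset.card Vm = ∑ s ∈ E₁, cnt s := by
    rw [hVm, Multiset.card_bind]
    rw [Finset.sum]
    congr 1
    apply Multiset.map_congr rfl
    intro s _
    simp [Multiset.card_replicate]
  have hsumcnt : (∑ s ∈ E₁, cnt s) + (m - 1) * (k - 1) = k * (n - 1) := by
    have h1 : ∀ s ∈ E₁, cnt s + (if s ∈ U then 1 else 0) = k := by
      intro s _
      rw [hcnt]
      by_cases hs : s ∈ U <;> simp [hs] <;> omega
    have h2 : (∑ s ∈ E₁, (cnt s + (if s ∈ U then 1 else 0))) = k * (n - 1) := by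
      rw [Finset.sum_congr rfl h1, Finset.sum_const, hE₁card, smul_eq_mul, mul_comm]
    rw [Finset.sum_add_distrib] at h2
    have h3 : (∑ s ∈ E₁, (if s ∈ U then 1 else 0)) = (m - 1) * (k - 1) := by
      rw [Finset.sum_ite_mem, Finset.inter_eq_right.mpr hUsub, Finset.sum_const,
        smul_eq_mul, mul_one, hUT, hTcard]
    rw [h3] at h2
    exact h2
  have hDmcard : Multiset.card Dm = (m - 1) * (k - 1) := by
    rw [hDm, Multiset.card_map, ← Finset.card_def, hTcard]
  have hLcard : Multiset.card L = k * (n - 1) + (m - 1) := by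
    rw [hLdef, Multiset.card_add, Multiset.card_add, hHmcard, hVmcard, hDmcard]
    omega
  -- diag unfolds
  have hdiag : ∀ (s t : ℝ) (ht : t ≠ 0), diag s t = ⟨t, s, s * t, Or.inl ht⟩ := by
    intro s t ht
    rw [diag, dif_neg ht]
  refine ⟨L, ⟨?_, ?_⟩, by rw [hLcard]⟩
  · -- no line through the origin
    intro l hl
    rw [hLdef] at hl
    simp only [Multiset.mem_add] at hl
    rcases hl with (hl | hl) | hl
    · rw [hHm] at hl
      obtain ⟨t, htmem, rfl⟩ := Multiset.mem_map.mp hl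
      have ht : t ≠ 0 := Finset.ne_of_mem_erase (Finset.mem_def.mpr htmem)
      intro hmem
      apply ht
      have : (0:ℝ) * 0 + 1 * 0 = t := hmem
      linarith
    · rw [hVm] at hl
      obtain ⟨s, hsmem, hl2⟩ := Multiset.mem_bind.mp hl
      have hs : s ≠ 0 := Finset.ne_of_mem_erase (Finset.mem_def.mpr hsmem)
      rw [Multiset.eq_of_mem_replicate hl2]
      intro hmem
      apply hs
      have : (1:ℝ) * 0 + 0 * 0 = s := hmem
      linarith
    · rw [hDm] at hl
      obtain ⟨p, hpmem, rfl⟩ := Multiset.mem_map.mp hl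
      have hpT : p ∈ T := Finset.mem_def.mpr hpmem
      have ht : p.1 ≠ 0 := Finset.ne_of_mem_erase (Finset.mem_product.mp hpT).1
      have hsU : gfun p ∈ U := hgmem p hpT
      have hs : gfun p ≠ 0 := Finset.ne_of_mem_erase (hUsub hsU)
      rw [hdiag _ _ ht]
      intro hmem
      have : p.1 * 0 + gfun p * 0 = gfun p * p.1 := hmem
      have h0 : gfun p * p.1 = 0 := by linarith
      rcases mul_eq_zero.mp h0 with h | h
      · exact hs h
      · exact ht h
  · -- coverage
    rintro ⟨x, y⟩ hp hne
    have hxy : x ∈ S₁ ∧ y ∈ S₂ := by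
      have := hp
      rw [Finset.coe_product] at this
      exact this
    obtain ⟨hx, hy⟩ := hxy
    have hfilter : (L.filter (fun l => l.Mem (x, y))).card =
        (Hm.filter (fun l => l.Mem (x, y))).card +
        (Vm.filter (fun l => l.Mem (x, y))).card +
        (Dm.filter (fun l => l.Mem (x, y))).card := by
      rw [hLdef, Multiset.filter_add, Multiset.filter_add, Multiset.card_add,
        Multiset.card_add]
    -- helper bounds
    have hHb : y ≠ 0 → 1 ≤ (Hm.filter (fun l => l.Mem (x, y))).card := by
      intro hy0
      refine Multiset.card_pos_iff_exists_mem.mpr ⟨horiz y, Multiset.mem_filter.mpr ⟨?_, ?_⟩⟩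
      · rw [hHm]
        exact Multiset.mem_map.mpr ⟨y, Finset.mem_def.mp (Finset.mem_erase.mpr ⟨hy0, hy⟩), rfl⟩
      · show (0:ℝ) * x + 1 * y = y
        ring
    have hVb : x ≠ 0 → cnt x ≤ (Vm.filter (fun l => l.Mem (x, y))).card := by
      intro hx0
      have hxE : x ∈ E₁ := Finset.mem_erase.mpr ⟨hx0, hx⟩
      have hle : Multiset.replicate (cnt x) (vert x) ≤ Vm :=
        hVm ▸ Multiset.le_bind E₁.val (Finset.mem_def.mp hxE)
      have hle2 : Multiset.replicate (cnt x) (vert x) ≤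
          Vm.filter (fun l => l.Mem (x, y)) := by
        rw [Multiset.le_filter]
        refine ⟨hle, ?_⟩
        intro l hl
        rw [Multiset.eq_of_mem_replicate hl]
        show (1:ℝ) * x + 0 * y = x
        ring
      have := Multiset.card_le_card hle2
      rwa [Multiset.card_replicate] at this
    have hDb1 : y = 0 → x ∈ U → 1 ≤ (Dm.filter (fun l => l.Mem (x, y))).card := by
      intro hy0 hxU
      obtain ⟨p, hpT, hgp⟩ := hgsurj x hxU
      refine Multiset.card_pos_iff_exists_mem.mpr ⟨diag (gfun p) p.1, Multiset.mem_filter.mpr ⟨?_, ?_⟩⟩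
      · rw [hDm]
        exact Multiset.mem_map.mpr ⟨p, Finset.mem_def.mp hpT, rfl⟩
      · have ht : p.1 ≠ 0 := Finset.ne_of_mem_erase (Finset.mem_product.mp hpT).1
        rw [hdiag _ _ ht, hgp, hy0]
        show p.1 * x + x * 0 = x * p.1
        ring
    have hDb2 : x = 0 → y ≠ 0 → k - 1 ≤ (Dm.filter (fun l => l.Mem (x, y))).card := by
      intro hx0 hy0
      have hyE : y ∈ E₂ := Finset.mem_erase.mpr ⟨hy0, hy⟩
      set sub : Multiset (ℝ × ℕ) := T.val.filter (fun p => p.1 = y) with hsub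
      have hsubcard : Multiset.card sub = k - 1 := by
        rw [hsub, ← Finset.filter_val, ← Finset.card_def]
        have : T.filter (fun p => p.1 = y) = {y} ×ˢ Finset.range (k - 1) := by
          ext ⟨a, b⟩
          simp only [Finset.mem_filter, hT, Finset.mem_product, Finset.mem_singleton,
            Finset.mem_range]
          constructor
          · rintro ⟨⟨_, hb⟩, ha⟩
            exact ⟨ha, hb⟩
          · rintro ⟨ha, hb⟩
            subst ha
            exact ⟨⟨hyE, hb⟩, rfl⟩
        rw [this, Finset.card_product, Finset.card_singleton, Finset.card_range, one_mul]
      have hle2 : sub.map (fun p => diag (gfun p) p.1) ≤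
          Dm.filter (fun l => l.Mem (x, y)) := by
        rw [Multiset.le_filter]
        constructor
        · rw [hDm]
          exact Multiset.map_le_map (Multiset.filter_le _ _)
        · intro l hl
          obtain ⟨p, hpsub, rfl⟩ := Multiset.mem_map.mp hl
          have hpT : p ∈ T := Finset.mem_def.mpr (Multiset.mem_of_mem_filter hpsub)
          have hpy : p.1 = y := (Multiset.mem_filter.mp hpsub).2
          have ht : p.1 ≠ 0 := Finset.ne_of_mem_erase (Finset.mem_product.mp hpT).1
          rw [hdiag _ _ ht]
          show p.1 * x + gfun p * y = gfun p * p.1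
          rw [hx0, hpy]
          ring
      have := Multiset.card_le_card hle2
      rw [Multiset.card_map, hsubcard] at this
      exact this
    -- case analysis
    rw [hfilter]
    by_cases hy0 : y = 0
    · have hx0 : x ≠ 0 := by
        intro h
        exact hne (by rw [h, hy0])
      by_cases hxU : x ∈ U
      · have h1 := hVb hx0
        have h2 := hDb1 hy0 hxU
        have h3 : cnt x = k - 1 := by rw [hcnt]; simp [hxU]
        omega
      · have h1 := hVb hx0
        have h3 : cnt x = k := by rw [hcnt]; simp [hxU]
        omega
    · by_cases hx0 : x = 0
      · have h1 := hHb hy0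
        have h2 := hDb2 hx0 hy0
        omega
      · have h1 := hVb hx0
        have h2 := hHb hy0
        have h3 : k - 1 ≤ cnt x := by rw [hcnt]; by_cases hxU : x ∈ U <;> simp [hxU] <;> omega
        omega


end CovAux

theorem stmt0 (S₁ S₂ : Finset ℝ) (n m k : ℕ)
    (h0₁ : (0 : ℝ) ∈ S₁) (h0₂ : (0 : ℝ) ∈ S₂)
    (hn : S₁.card = n) (hm : S₂.card = m)
    (hk : 1 ≤ k) (hnm : (k - 1) * (m - 1) + 1 ≤ n) :
    cov (↑(S₁ ×ˢ S₂)) k = k * (n - 1) + (m - 1) := by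
  subst hn hm
  apply le_antisymm
  · obtain ⟨L, hL, hcard⟩ := CovAux.exists_cover S₁ S₂ k h0₁ h0₂ hk hnm
    exact Nat.sInf_le ⟨L, hL, hcard⟩
  · apply le_csInf
    · obtain ⟨L, hL, hcard⟩ := CovAux.exists_cover S₁ S₂ k h0₁ h0₂ hk hnm
      exact ⟨_, L, hL, hcard⟩
    · rintro b ⟨L, hL, rfl⟩
      exact CovAux.lower_bound S₁ S₂ k L h0₁ h0₂ hk hL
end

section
/- Let S₁, S₂ ⊆ ℝ be finite sets with 0 ∈ S₁ ∩ S₂, |S₁| = n ≥ 2 and |S₂| = m ≥ 2, and let Γ = S₁ × S₂ ⊆ ℝ². If k is a positive integer divisible by (n+m−2)/gcd(n−1, m−1), then cov_k(Γ) ≤ k(n−1) + k(m−1)²/(n+m−2). -/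
open scoped Classical

/-- vertical line x = x0 -/
def vline (x0 : ℝ) : Line2 := ⟨1, 0, x0, Or.inl one_ne_zero⟩

/-- horizontal line y = y0 -/
def hline (y0 : ℝ) : Line2 := ⟨0, 1, y0, Or.inr one_ne_zero⟩

/-- slanted line through (0, y0) and (x0, 0) -/
noncomputable def sline (y0 x0 : ℝ) : Line2 :=
  if h : y0 ≠ 0 then ⟨y0, x0, x0 * y0, Or.inl h⟩ else vline 1

lemma sline_eq {y0 : ℝ} (x0 : ℝ) (h : y0 ≠ 0) :
    sline y0 x0 = ⟨y0, x0, x0 * y0, Or.inl h⟩ := by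
  simp [sline, h]

lemma aux_card_le {α : Type*} (s u : Finset α) (f : α → Line2) (P : Line2 → Prop)
    [DecidablePred P] [DecidablePred fun x => P (f x)]
    (hu : u ⊆ s) (h : ∀ x ∈ u, P (f x)) :
    u.card ≤ (Multiset.filter (fun l => P l) (s.val.map f)).card := by
  rw [Multiset.filter_map, Multiset.card_map]
  have h2 : Multiset.filter ((fun l => P l) ∘ f) s.val
      = (s.filter (fun x => P (f x))).val := by
    rw [Finset.filter_val]
    apply Multiset.filter_congr; intro x _; rfl
  rw [h2, ← Finset.card_def]
  exact Finset.card_le_card (fun x hx => Finset.mem_filter.mpr ⟨hu hx, h x hx⟩)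

theorem stmt2 (S₁ S₂ : Finset ℝ) (n m : ℕ)
    (h0₁ : (0 : ℝ) ∈ S₁) (h0₂ : (0 : ℝ) ∈ S₂)
    (hn : S₁.card = n) (hm : S₂.card = m) (hn2 : 2 ≤ n) (hm2 : 2 ≤ m)
    (k : ℕ) (hk : 1 ≤ k) (hdvd : ((n + m - 2) / Nat.gcd (n - 1) (m - 1)) ∣ k) :
    (cov (↑(S₁ ×ˢ S₂)) k : ℝ)
      ≤ (k : ℝ) * ((n : ℝ) - 1) + (k : ℝ) * ((m : ℝ) - 1) ^ 2 / ((n : ℝ) + (m : ℝ) - 2) := by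
  classical
  obtain ⟨d, hd⟩ : ∃ d, d = Nat.gcd (n - 1) (m - 1) := ⟨_, rfl⟩
  obtain ⟨S, hS⟩ : ∃ S, S = n + m - 2 := ⟨_, rfl⟩
  rw [← hd, ← hS] at hdvd
  have hSsum : S = (n - 1) + (m - 1) := by omega
  have hd1 : d ∣ (n - 1) := hd ▸ Nat.gcd_dvd_left _ _
  have hd2 : d ∣ (m - 1) := hd ▸ Nat.gcd_dvd_right _ _
  have hdS : d ∣ S := hSsum ▸ Nat.dvd_add hd1 hd2
  have hdpos : 0 < d := hd ▸ Nat.gcd_pos_of_pos_left _ (by omega)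
  have hSpos : 0 < S := by omega
  obtain ⟨q, hq⟩ := hdvd
  obtain ⟨r, hr⟩ := hd2
  obtain ⟨r', hr'⟩ := hd1
  obtain ⟨w, hw⟩ := hdS
  have hwq : S / d = w := by rw [hw]; exact Nat.mul_div_cancel_left w hdpos
  obtain ⟨t, ht⟩ : ∃ t, k * (m - 1) = S * t :=
    ⟨q * r, by rw [hq, hwq, hr, hw]; ring⟩
  obtain ⟨a, ha⟩ : ∃ a, k * (n - 1) = S * a :=
    ⟨q * r', by rw [hq, hwq, hr', hw]; ring⟩
  have hta : t + a = k := by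
    have h1 : S * (t + a) = S * k := by
      rw [Nat.mul_add, ← ht, ← ha, hSsum]; ring
    exact Nat.eq_of_mul_eq_mul_left hSpos h1
  have htk : t ≤ k := by omega
  obtain ⟨E, hEdef⟩ : ∃ E, E = (n - 1) * t := ⟨_, rfl⟩
  have hE2 : E = (m - 1) * a := by
    have h1 : S * E = S * ((m - 1) * a) := by
      calc S * E = (n - 1) * (k * (m - 1)) := by rw [hEdef, ht]; ring
        _ = (m - 1) * (k * (n - 1)) := by ring
        _ = S * ((m - 1) * a) := by rw [ha]; ring
    exact Nat.eq_of_mul_eq_mul_left hSpos h1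
  -- lists enumerating nonzero elements
  set l₁ := (S₁.erase 0).toList with hl₁def
  set l₂ := (S₂.erase 0).toList with hl₂def
  have hl₁len : l₁.length = n - 1 := by
    rw [hl₁def, Finset.length_toList, Finset.card_erase_of_mem h0₁, hn]
  have hl₂len : l₂.length = m - 1 := by
    rw [hl₂def, Finset.length_toList, Finset.card_erase_of_mem h0₂, hm]
  have hget₁ : ∀ i, l₁.getD i 1 ∈ S₁.erase 0 ∨ l₁.getD i 1 = 1 := by
    intro i
    by_cases h : i < l₁.length
    · left; rw [List.getD_eq_getElem _ _ h]
      exact Finset.mem_toList.mp (List.getElem_mem _)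
    · right; rw [List.getD_eq_default _ _ (by omega)]
  have hget₂ : ∀ i, l₂.getD i 1 ∈ S₂.erase 0 ∨ l₂.getD i 1 = 1 := by
    intro i
    by_cases h : i < l₂.length
    · left; rw [List.getD_eq_getElem _ _ h]
      exact Finset.mem_toList.mp (List.getElem_mem _)
    · right; rw [List.getD_eq_default _ _ (by omega)]
  have hget₁ne : ∀ i, l₁.getD i 1 ≠ 0 := by
    intro i; rcases hget₁ i with h | h
    · exact (Finset.mem_erase.mp h).1
    · rw [h]; exact one_ne_zero
  have hget₂ne : ∀ i, l₂.getD i 1 ≠ 0 := by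
    intro i; rcases hget₂ i with h | h
    · exact (Finset.mem_erase.mp h).1
    · rw [h]; exact one_ne_zero
  -- the multiset of lines
  set A₁ : Finset (ℝ × ℕ) := (S₁.erase 0) ×ˢ Finset.range (k - t) with hA₁
  set A₂ : Finset (ℝ × ℕ) := (S₂.erase 0) ×ˢ Finset.range t with hA₂
  set A₃ : Finset ℕ := Finset.range E with hA₃
  set f₁ : ℝ × ℕ → Line2 := fun p => vline p.1 with hf₁
  set f₂ : ℝ × ℕ → Line2 := fun p => hline p.1 with hf₂
  set f₃ : ℕ → Line2 := fun e => sline (l₂.getD (e / a) 1) (l₁.getD (e / t) 1) with hf₃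
  set L : Multiset Line2 := A₁.val.map f₁ + A₂.val.map f₂ + A₃.val.map f₃ with hL
  have hcardL : Multiset.card L = (n - 1) * (k - t) + (m - 1) * t + E := by
    rw [hL]
    simp [hA₁, hA₂, hA₃, Finset.card_erase_of_mem, h0₁, h0₂, hn, hm]
  -- it is a k-cover
  have hcover : IsKCover (↑(S₁ ×ˢ S₂)) k L := by
    constructor
    · intro l hl
      rw [hL] at hl
      simp only [Multiset.mem_add, Multiset.mem_map] at hl
      rcases hl with (⟨x, hx, rfl⟩ | ⟨y, hy, rfl⟩) | ⟨e, _, rfl⟩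
      · have hx' : x ∈ A₁ := hx
        have hx0 : x.1 ≠ 0 := (Finset.mem_erase.mp (Finset.mem_product.mp hx').1).1
        intro hcon
        rw [hf₁] at hcon
        simp only [vline, Line2.Mem, mul_zero, add_zero, one_mul] at hcon
        exact hx0 hcon.symm
      · have hy' : y ∈ A₂ := hy
        have hy0 : y.1 ≠ 0 := (Finset.mem_erase.mp (Finset.mem_product.mp hy').1).1
        intro hcon
        rw [hf₂] at hcon
        simp only [hline, Line2.Mem, mul_zero, add_zero, zero_add, one_mul] at hcon
        exact hy0 hcon.symm
      · have hy0 := hget₂ne (e / a)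
        have hx0 := hget₁ne (e / t)
        intro hcon
        rw [hf₃] at hcon
        simp only [sline_eq _ hy0, Line2.Mem, mul_zero, add_zero] at hcon
        exact mul_ne_zero hx0 hy0 hcon.symm
    · intro p hp hp0
      have hp' : p.1 ∈ S₁ ∧ p.2 ∈ S₂ := by
        simpa [Finset.mem_product] using hp
      have hfa : (L.filter (fun l => l.Mem p)).card
          = (Multiset.filter (fun l => l.Mem p) (A₁.val.map f₁)).card
            + (Multiset.filter (fun l => l.Mem p) (A₂.val.map f₂)).card
            + (Multiset.filter (fun l => l.Mem p) (A₃.val.map f₃)).card := by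
        rw [hL, Multiset.filter_add, Multiset.filter_add, Multiset.card_add,
          Multiset.card_add]
      have c₁ : p.1 ≠ 0 → k - t ≤ (Multiset.filter (fun l => l.Mem p) (A₁.val.map f₁)).card := by
        intro hx
        have hsub : ({p.1} ×ˢ Finset.range (k - t)) ⊆ A₁ := by
          intro z hz
          rw [Finset.mem_product, Finset.mem_singleton] at hz
          rw [hA₁, Finset.mem_product]
          exact ⟨Finset.mem_erase.mpr ⟨hz.1 ▸ hx, hz.1 ▸ hp'.1⟩, hz.2⟩
        have hmem : ∀ z ∈ ({p.1} ×ˢ Finset.range (k - t)), (f₁ z).Mem p := by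
          intro z hz
          rw [Finset.mem_product, Finset.mem_singleton] at hz
          rw [hf₁]
          show (1 : ℝ) * p.1 + 0 * p.2 = z.1
          rw [hz.1]; ring
        have := aux_card_le A₁ ({p.1} ×ˢ Finset.range (k - t)) f₁ (fun l => l.Mem p) hsub hmem
        simpa using this
      have c₂ : p.2 ≠ 0 → t ≤ (Multiset.filter (fun l => l.Mem p) (A₂.val.map f₂)).card := by
        intro hy
        have hsub : ({p.2} ×ˢ Finset.range t) ⊆ A₂ := by
          intro z hz
          rw [Finset.mem_product, Finset.mem_singleton] at hz
          rw [hA₂, Finset.mem_product]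
          exact ⟨Finset.mem_erase.mpr ⟨hz.1 ▸ hy, hz.1 ▸ hp'.2⟩, hz.2⟩
        have hmem : ∀ z ∈ ({p.2} ×ˢ Finset.range t), (f₂ z).Mem p := by
          intro z hz
          rw [Finset.mem_product, Finset.mem_singleton] at hz
          rw [hf₂]
          show (0 : ℝ) * p.1 + 1 * p.2 = z.1
          rw [hz.1]; ring
        have := aux_card_le A₂ ({p.2} ×ˢ Finset.range t) f₂ (fun l => l.Mem p) hsub hmem
        simpa using this
      have c₃ : p.1 ≠ 0 → p.2 = 0 →
          t ≤ (Multiset.filter (fun l => l.Mem p) (A₃.val.map f₃)).card := by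
        intro hx hy
        have hmem₁ : p.1 ∈ l₁ := by
          rw [hl₁def, Finset.mem_toList]
          exact Finset.mem_erase.mpr ⟨hx, hp'.1⟩
        set j := l₁.idxOf p.1 with hj
        have hjlt : j < n - 1 := by
          rw [← hl₁len]; exact List.idxOf_lt_length_iff.mpr hmem₁
        have hsub : Finset.Ico (j * t) ((j + 1) * t) ⊆ A₃ := by
          intro e he
          rw [Finset.mem_Ico] at he
          rw [hA₃, Finset.mem_range, hEdef]
          calc e < (j + 1) * t := he.2
            _ ≤ (n - 1) * t := Nat.mul_le_mul_right _ (by omega)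
        have hmem : ∀ e ∈ Finset.Ico (j * t) ((j + 1) * t), (f₃ e).Mem p := by
          intro e he
          rw [Finset.mem_Ico] at he
          have hdiv : e / t = j := Nat.div_eq_of_lt_le he.1 he.2
          have hx1 : l₁.getD (e / t) 1 = p.1 := by
            rw [hdiv, hj, List.getD_eq_getElem _ _ (List.idxOf_lt_length_iff.mpr hmem₁)]
            exact List.getElem_idxOf _
          have hy0 := hget₂ne (e / a)
          have hfe : f₃ e = sline (l₂.getD (e / a) 1) p.1 := by
            rw [hf₃]; simp only; rw [hx1]
          rw [hfe, sline_eq _ hy0]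
          show l₂.getD (e / a) 1 * p.1 + p.1 * p.2 = p.1 * l₂.getD (e / a) 1
          rw [hy]; ring
        have := aux_card_le A₃ (Finset.Ico (j * t) ((j + 1) * t)) f₃ (fun l => l.Mem p) hsub hmem
        simpa [Nat.card_Ico, Nat.succ_mul] using this
      have c₄ : p.1 = 0 → p.2 ≠ 0 →
          a ≤ (Multiset.filter (fun l => l.Mem p) (A₃.val.map f₃)).card := by
        intro hx hy
        have hmem₂ : p.2 ∈ l₂ := by
          rw [hl₂def, Finset.mem_toList]
          exact Finset.mem_erase.mpr ⟨hy, hp'.2⟩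
        set i := l₂.idxOf p.2 with hi
        have hilt : i < m - 1 := by
          rw [← hl₂len]; exact List.idxOf_lt_length_iff.mpr hmem₂
        have hsub : Finset.Ico (i * a) ((i + 1) * a) ⊆ A₃ := by
          intro e he
          rw [Finset.mem_Ico] at he
          rw [hA₃, Finset.mem_range, hE2]
          calc e < (i + 1) * a := he.2
            _ ≤ (m - 1) * a := Nat.mul_le_mul_right _ (by omega)
        have hmem : ∀ e ∈ Finset.Ico (i * a) ((i + 1) * a), (f₃ e).Mem p := by
          intro e he
          rw [Finset.mem_Ico] at he
          have hdiv : e / a = i := Nat.div_eq_of_lt_le he.1 he.2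
          have hy1 : l₂.getD (e / a) 1 = p.2 := by
            rw [hdiv, hi, List.getD_eq_getElem _ _ (List.idxOf_lt_length_iff.mpr hmem₂)]
            exact List.getElem_idxOf _
          have hfe : f₃ e = sline p.2 (l₁.getD (e / t) 1) := by
            rw [hf₃]; simp only; rw [hy1]
          rw [hfe, sline_eq _ hy]
          show p.2 * p.1 + l₁.getD (e / t) 1 * p.2 = l₁.getD (e / t) 1 * p.2
          rw [hx]; ring
        have := aux_card_le A₃ (Finset.Ico (i * a) ((i + 1) * a)) f₃ (fun l => l.Mem p) hsub hmem
        simpa [Nat.card_Ico, Nat.succ_mul] using this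
      rw [hfa]
      by_cases hx : p.1 = 0
      · have hy : p.2 ≠ 0 := by
          intro hy; exact hp0 (Prod.ext hx hy)
        have h2 := c₂ hy
        have h4 := c₄ hx hy
        omega
      · by_cases hy : p.2 = 0
        · have h1 := c₁ hx
          have h3 := c₃ hx hy
          omega
        · have h1 := c₁ hx
          have h2 := c₂ hy
          omega
  -- conclude
  have hcovle : cov (↑(S₁ ×ˢ S₂)) k ≤ (n - 1) * (k - t) + (m - 1) * t + E :=
    Nat.sInf_le ⟨L, hcover, hcardL⟩
  have eN : (n - 1) * (k - t) + (m - 1) * t + E = (n - 1) * k + (m - 1) * t := by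
    rw [hEdef]
    zify [htk]
    ring
  rw [eN] at hcovle
  have hSne : (n : ℝ) + (m : ℝ) - 2 ≠ 0 := by
    have h1 : (2 : ℝ) ≤ (n : ℝ) := by exact_mod_cast hn2
    have h2 : (2 : ℝ) ≤ (m : ℝ) := by exact_mod_cast hm2
    linarith
  have htcast : ((n : ℝ) + (m : ℝ) - 2) * (t : ℝ) = (k : ℝ) * ((m : ℝ) - 1) := by
    rw [hS] at ht
    have h1 : ((k * (m - 1) : ℕ) : ℝ) = (((n + m - 2) * t : ℕ) : ℝ) := by rw [ht]
    push_cast [Nat.cast_sub (show 1 ≤ m by omega), Nat.cast_sub (show 2 ≤ n + m by omega)] at h1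
    linarith
  calc (cov (↑(S₁ ×ˢ S₂)) k : ℝ) ≤ (((n - 1) * k + (m - 1) * t : ℕ) : ℝ) := by
        exact_mod_cast hcovle
    _ = ((n : ℝ) - 1) * k + ((m : ℝ) - 1) * t := by
        push_cast [Nat.cast_sub (show 1 ≤ n by omega), Nat.cast_sub (show 1 ≤ m by omega)]
        ring
    _ = (k : ℝ) * ((n : ℝ) - 1) + (k : ℝ) * ((m : ℝ) - 1) ^ 2 / ((n : ℝ) + (m : ℝ) - 2) := by
        have h2 : ((m : ℝ) - 1) * t = (k : ℝ) * ((m : ℝ) - 1) ^ 2 / ((n : ℝ) + (m : ℝ) - 2) := by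
          rw [eq_div_iff hSne]
          linear_combination ((m : ℝ) - 1) * htcast
        rw [h2]; ring
end

section
/- Let S₁, S₂ ⊆ ℝ be finite sets with 0 ∈ S₁ ∩ S₂ and |S₁| = |S₂| = n ≥ 2, and let Γ = S₁ × S₂ ⊆ ℝ². If Γ is Δ-generic for some integer Δ with 0 ≤ Δ ≤ n−1, then for every integer k ≥ 2, cov_k(Γ) ≥ (2 − (n−1)/(2(n−1) − Δ)) · k(n−1). -/
open scoped Classical

/-- A boundary point of the grid: one of its coordinates is `0`. -/
def IsBoundary (Γ : Set (ℝ × ℝ)) (p : ℝ × ℝ) : Prop :=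
  p ∈ Γ ∧ (p.1 = 0 ∨ p.2 = 0)

/-- An interior point of the grid: none of its coordinates is `0`. -/
def IsInterior (Γ : Set (ℝ × ℝ)) (p : ℝ × ℝ) : Prop :=
  p ∈ Γ ∧ p.1 ≠ 0 ∧ p.2 ≠ 0

/-- `Γ` is `Δ`-generic: every line through two distinct boundary points of `Γ` contains
at most `Δ` interior points of `Γ`. -/
def DeltaGeneric (Γ : Set (ℝ × ℝ)) (Δ : ℕ) : Prop :=
  ∀ l : Line2,
    (∃ p q : ℝ × ℝ, p ≠ q ∧ IsBoundary Γ p ∧ IsBoundary Γ q ∧ l.Mem p ∧ l.Mem q) →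
      Set.ncard {r : ℝ × ℝ | IsInterior Γ r ∧ l.Mem r} ≤ Δ


-- swap sum lemma
lemma swap_sum (L : Multiset Line2) (T : Finset (ℝ × ℝ)) :
    ∑ p ∈ T, Multiset.card (L.filter fun l => l.Mem p)
      = (L.map fun l => (T.filter fun p => l.Mem p).card).sum := by
  induction L using Multiset.induction with
  | empty => simp
  | cons l L ih =>
    simp only [Multiset.filter_cons, Multiset.card_add, Multiset.map_cons, Multiset.sum_cons,
      Finset.sum_add_distrib, ih, apply_ite Multiset.card, Multiset.card_singleton,
      Multiset.card_zero]
    congr 1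
    rw [Finset.card_filter]

lemma cast_sum_map (L : Multiset Line2) (f : Line2 → ℕ) :
    (L.map fun l => ((f l : ℝ))).sum = ((L.map f).sum : ℝ) := by
  induction L using Multiset.induction with
  | empty => simp
  | cons l L ih =>
    rw [Multiset.map_cons, Multiset.map_cons, Multiset.sum_cons, Multiset.sum_cons, ih,
      Nat.cast_add]

-- line through a point, not through origin
noncomputable def lineThrough (p : ℝ × ℝ) : Line2 :=
  if p.1 + p.2 = 0 then ⟨1, -1, p.1 - p.2, Or.inl one_ne_zero⟩
  else ⟨1, 1, p.1 + p.2, Or.inl one_ne_zero⟩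

lemma lineThrough_mem (p : ℝ × ℝ) : (lineThrough p).Mem p := by
  unfold lineThrough Line2.Mem
  split <;> ring

lemma lineThrough_not_origin (p : ℝ × ℝ) (hp : p ≠ (0, 0)) :
    ¬ (lineThrough p).Mem (0, 0) := by
  unfold lineThrough Line2.Mem
  split
  next h =>
    simp only
    intro hc
    apply hp
    have h1 : p.1 = 0 := by linarith [hc]
    have h2 : p.2 = 0 := by linarith
    exact Prod.ext h1 h2
  next h =>
    simp only
    intro hc
    exact h (by linarith)

lemma boundary_filter_card (S₁ S₂ : Finset ℝ) (l : Line2) (h0 : ¬ l.Mem (0, 0)) :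
    ((((S₁.erase 0).image fun x => ((x : ℝ), (0 : ℝ))) ∪
      ((S₂.erase 0).image fun y => ((0 : ℝ), y))).filter l.Mem).card ≤ 2 := by
  have horig : ∀ c : ℝ, l.c = 0 → False := by
    intro c hc
    exact h0 (by simp [Line2.Mem, hc])
  rw [Finset.filter_union]
  refine le_trans (Finset.card_union_le _ _) ?_
  have h1 : (((S₁.erase 0).image fun x => ((x : ℝ), (0 : ℝ))).filter l.Mem).card ≤ 1 := by
    rw [Finset.card_le_one]
    intro p hp q hq
    rw [Finset.mem_filter, Finset.mem_image] at hp hq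
    obtain ⟨⟨x, hx, rfl⟩, hpl⟩ := hp
    obtain ⟨⟨y, hy, rfl⟩, hql⟩ := hq
    simp only [Line2.Mem, mul_zero, add_zero] at hpl hql
    have ha : l.a ≠ 0 := by
      intro h
      exact horig l.c (by rw [← hpl, h, zero_mul])
    have : x = y := mul_left_cancel₀ ha (hpl.trans hql.symm)
    rw [this]
  have h2 : (((S₂.erase 0).image fun y => ((0 : ℝ), y)).filter l.Mem).card ≤ 1 := by
    rw [Finset.card_le_one]
    intro p hp q hq
    rw [Finset.mem_filter, Finset.mem_image] at hp hq
    obtain ⟨⟨x, hx, rfl⟩, hpl⟩ := hp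
    obtain ⟨⟨y, hy, rfl⟩, hql⟩ := hq
    simp only [Line2.Mem, mul_zero, zero_add] at hpl hql
    have hb : l.b ≠ 0 := by
      intro h
      exact horig l.c (by rw [← hpl, h, zero_mul])
    have : x = y := mul_left_cancel₀ hb (hpl.trans hql.symm)
    rw [this]
  omega

lemma interior_filter_card (A B : Finset ℝ) (l : Line2) (h : B.card = A.card) :
    ((A ×ˢ B).filter l.Mem).card ≤ A.card := by
  by_cases hb : l.b = 0
  · have ha : l.a ≠ 0 := l.nondeg.resolve_right (by simp [hb])
    rw [← h]
    apply Finset.card_le_card_of_injOn (fun p => p.2)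
    · intro p hp
      rw [Finset.mem_coe, Finset.mem_filter, Finset.mem_product] at hp
      exact hp.1.2
    · intro p hp q hq hpq
      simp only [Finset.coe_filter, Set.mem_setOf_eq] at hp hq
      have h1 : l.a * p.1 + l.b * p.2 = l.c := hp.2
      have h2 : l.a * q.1 + l.b * q.2 = l.c := hq.2
      rw [hb] at h1 h2
      have : p.1 = q.1 := by
        simp only [zero_mul, add_zero] at h1 h2
        exact mul_left_cancel₀ ha (h1.trans h2.symm)
      exact Prod.ext this hpq
  · apply Finset.card_le_card_of_injOn (fun p => p.1)
    · intro p hp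
      rw [Finset.mem_coe, Finset.mem_filter, Finset.mem_product] at hp
      exact hp.1.1
    · intro p hp q hq hpq
      simp only [Finset.coe_filter, Set.mem_setOf_eq] at hp hq
      have h1 : l.a * p.1 + l.b * p.2 = l.c := hp.2
      have h2 : l.a * q.1 + l.b * q.2 = l.c := hq.2
      simp only at hpq
      refine Prod.ext hpq ?_
      have : l.b * p.2 = l.b * q.2 := by rw [hpq] at h1; linarith
      exact mul_left_cancel₀ hb this

theorem stmt5 (S₁ S₂ : Finset ℝ) (n : ℕ)
    (h0₁ : (0 : ℝ) ∈ S₁) (h0₂ : (0 : ℝ) ∈ S₂)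
    (hn : S₁.card = n) (hm : S₂.card = n) (hn2 : 2 ≤ n)
    (Δ : ℕ) (hΔ : Δ ≤ n - 1) (hgen : DeltaGeneric (↑(S₁ ×ˢ S₂)) Δ)
    (k : ℕ) (hk : 2 ≤ k) :
    (2 - ((n : ℝ) - 1) / (2 * ((n : ℝ) - 1) - (Δ : ℝ))) * ((k : ℝ) * ((n : ℝ) - 1))
      ≤ (cov (↑(S₁ ×ˢ S₂)) k : ℝ) := by
  set Γ : Set (ℝ × ℝ) := ↑(S₁ ×ˢ S₂) with hΓ
  set A : Finset ℝ := S₁.erase 0 with hAdef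
  set B : Finset ℝ := S₂.erase 0 with hBdef
  set Bd : Finset (ℝ × ℝ) :=
    (A.image fun x => ((x : ℝ), (0 : ℝ))) ∪ (B.image fun y => ((0 : ℝ), y)) with hBddef
  set I : Finset (ℝ × ℝ) := A ×ˢ B with hIdef
  have hA : A.card = n - 1 := by rw [hAdef, Finset.card_erase_of_mem h0₁, hn]
  have hB : B.card = n - 1 := by rw [hBdef, Finset.card_erase_of_mem h0₂, hm]
  have hBd : Bd.card = 2 * (n - 1) := by
    rw [hBddef, Finset.card_union_of_disjoint, Finset.card_image_of_injective,
      Finset.card_image_of_injective, hA, hB]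
    · omega
    · intro x y hxy; exact congrArg Prod.snd hxy
    · intro x y hxy; exact congrArg Prod.fst hxy
    · rw [Finset.disjoint_left]
      rintro ⟨u, v⟩ hu hv
      rw [Finset.mem_image] at hu hv
      obtain ⟨x, hx, hx'⟩ := hu
      obtain ⟨y, hy, hy'⟩ := hv
      have h1 : u = x := (congrArg Prod.fst hx').symm
      have h2 : u = 0 := (congrArg Prod.fst hy').symm
      rw [hAdef, Finset.mem_erase] at hx
      exact hx.1 (by rw [← h1, h2])
  have hI : I.card = (n - 1) * (n - 1) := by rw [hIdef, Finset.card_product, hA, hB]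
  -- membership facts
  have hBdΓ : ∀ p ∈ Bd, p ∈ Γ ∧ p ≠ ((0 : ℝ), (0 : ℝ)) := by
    intro p hp
    rw [hBddef, Finset.mem_union, Finset.mem_image, Finset.mem_image] at hp
    rcases hp with ⟨x, hx, rfl⟩ | ⟨y, hy, rfl⟩
    · rw [hAdef, Finset.mem_erase] at hx
      constructor
      · rw [hΓ, Finset.mem_coe, Finset.mem_product]; exact ⟨hx.2, h0₂⟩
      · intro h; exact hx.1 (congrArg Prod.fst h)
    · rw [hBdef, Finset.mem_erase] at hy
      constructor
      · rw [hΓ, Finset.mem_coe, Finset.mem_product]; exact ⟨h0₁, hy.2⟩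
      · intro h; exact hy.1 (congrArg Prod.snd h)
  have hIΓ : ∀ p ∈ I, p ∈ Γ ∧ p ≠ ((0 : ℝ), (0 : ℝ)) := by
    intro p hp
    rw [hIdef, Finset.mem_product] at hp
    rw [hAdef, Finset.mem_erase] at hp
    constructor
    · rw [hΓ, Finset.mem_coe, Finset.mem_product]
      exact ⟨hp.1.2, Finset.mem_of_mem_erase hp.2⟩
    · intro h; exact hp.1.1 (congrArg Prod.fst h)
  have hBdIsB : ∀ p ∈ Bd, IsBoundary Γ p := by
    intro p hp
    refine ⟨(hBdΓ p hp).1, ?_⟩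
    rw [hBddef, Finset.mem_union, Finset.mem_image, Finset.mem_image] at hp
    rcases hp with ⟨x, hx, rfl⟩ | ⟨y, hy, rfl⟩
    · exact Or.inr rfl
    · exact Or.inl rfl
  -- existence of a k-cover
  have hkpos : k ≠ 0 := by omega
  have hex : {m | ∃ L : Multiset Line2, IsKCover Γ k L ∧ Multiset.card L = m}.Nonempty := by
    refine ⟨_, k • (((S₁ ×ˢ S₂).erase ((0 : ℝ), (0 : ℝ))).val.map lineThrough), ⟨?_, ?_⟩, rfl⟩
    · intro l hl
      rw [Multiset.mem_nsmul] at hl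
      obtain ⟨p, hp, rfl⟩ := Multiset.mem_map.mp hl.2
      rw [Finset.mem_val, Finset.mem_erase] at hp
      exact lineThrough_not_origin p hp.1
    · intro p hp hpne
      rw [← Multiset.countP_eq_card_filter, Multiset.countP_nsmul]
      have hpos : 0 < Multiset.countP (fun l => l.Mem p)
          (((S₁ ×ˢ S₂).erase ((0 : ℝ), (0 : ℝ))).val.map lineThrough) := by
        rw [Multiset.countP_pos]
        refine ⟨lineThrough p, Multiset.mem_map.mpr ⟨p, ?_, rfl⟩, lineThrough_mem p⟩
        rw [Finset.mem_val, Finset.mem_erase]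
        exact ⟨hpne, hp⟩
      calc k = k * 1 := (mul_one k).symm
        _ ≤ _ := Nat.mul_le_mul_left k hpos
  obtain ⟨L, hL, hLcard⟩ := Nat.sInf_mem hex
  rw [show cov Γ k = Multiset.card L from hLcard.symm]
  -- real number setup
  have h1n : (1 : ℝ) ≤ (n : ℝ) - 1 := by
    have : (2 : ℝ) ≤ (n : ℝ) := by exact_mod_cast hn2
    linarith
  set N : ℝ := (n : ℝ) - 1 with hNdef
  have hcastN : ((n - 1 : ℕ) : ℝ) = N := by
    rw [Nat.cast_sub (by omega)]; simp [hNdef]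
  have hΔN : (Δ : ℝ) ≤ N := by
    rw [← hcastN]; exact_mod_cast hΔ
  set D : ℝ := 2 * N - (Δ : ℝ) with hDdef
  have hD : 0 < D := by rw [hDdef]; linarith
  set α : ℝ := (N - (Δ : ℝ)) / D with hαdef
  set β : ℝ := 1 / D with hβdef
  have hα : 0 ≤ α := div_nonneg (by linarith) hD.le
  have hβ : 0 ≤ β := by positivity
  -- coverage sums
  set SB : ℕ := (L.map fun l => (Bd.filter fun p => l.Mem p).card).sum with hSBdef
  set SI : ℕ := (L.map fun l => (I.filter fun p => l.Mem p).card).sum with hSIdef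
  have hSB : k * (2 * (n - 1)) ≤ SB := by
    rw [hSBdef, ← swap_sum]
    calc k * (2 * (n - 1)) = ∑ _p ∈ Bd, k := by
          rw [Finset.sum_const, hBd, smul_eq_mul, mul_comm]
      _ ≤ _ := by
          refine Finset.sum_le_sum fun p hp => ?_
          exact hL.2 p (hBdΓ p hp).1 (hBdΓ p hp).2
  have hSI : k * ((n - 1) * (n - 1)) ≤ SI := by
    rw [hSIdef, ← swap_sum]
    calc k * ((n - 1) * (n - 1)) = ∑ _p ∈ I, k := by
          rw [Finset.sum_const, hI, smul_eq_mul, mul_comm]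
      _ ≤ _ := by
          refine Finset.sum_le_sum fun p hp => ?_
          exact hL.2 p (hIΓ p hp).1 (hIΓ p hp).2
  -- per-line bound
  have key : ∀ l ∈ L, α * ((Bd.filter fun p => l.Mem p).card : ℝ)
      + β * ((I.filter fun p => l.Mem p).card : ℝ) ≤ 1 := by
    intro l hl
    have h0 : ¬ l.Mem (0, 0) := hL.1 l hl
    have hi : (I.filter fun p => l.Mem p).card ≤ n - 1 := by
      have := interior_filter_card A B l (hB.trans hA.symm)
      rw [hA] at this
      exact this
    have hir : ((I.filter fun p => l.Mem p).card : ℝ) ≤ N := by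
      rw [← hcastN]; exact_mod_cast hi
    by_cases hcase : (Bd.filter fun p => l.Mem p).card ≤ 1
    · have hbr : ((Bd.filter fun p => l.Mem p).card : ℝ) ≤ 1 := by exact_mod_cast hcase
      have heq : α * 1 + β * N = 1 := by
        rw [hαdef, hβdef]; field_simp; rw [hDdef]; ring
      nlinarith [mul_le_mul_of_nonneg_left hbr hα, mul_le_mul_of_nonneg_left hir hβ]
    · push_neg at hcase
      obtain ⟨p, hp, q, hq, hpq⟩ := Finset.one_lt_card.mp hcase
      rw [Finset.mem_filter] at hp hq
      have hΔi : (I.filter fun p => l.Mem p).card ≤ Δ := by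
        have hgl := hgen l ⟨p, q, hpq, hBdIsB p hp.1, hBdIsB q hq.1, hp.2, hq.2⟩
        have hset : {r : ℝ × ℝ | IsInterior Γ r ∧ l.Mem r}
            = ↑(I.filter fun p => l.Mem p) := by
          ext r
          simp only [Set.mem_setOf_eq, Finset.coe_filter, IsInterior, hΓ, hIdef,
            Finset.mem_coe, Finset.mem_product, hAdef, hBdef, Finset.mem_erase]
          tauto
        rw [hset, Set.ncard_coe_finset] at hgl
        exact hgl
      have hbr : ((Bd.filter fun p => l.Mem p).card : ℝ) ≤ 2 := by
        exact_mod_cast boundary_filter_card S₁ S₂ l h0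
      have hirΔ : ((I.filter fun p => l.Mem p).card : ℝ) ≤ (Δ : ℝ) := by exact_mod_cast hΔi
      have heq : α * 2 + β * (Δ : ℝ) = 1 := by
        rw [hαdef, hβdef]; field_simp; rw [hDdef]; ring
      nlinarith [mul_le_mul_of_nonneg_left hbr hα, mul_le_mul_of_nonneg_left hirΔ hβ]
  -- sum the per-line bounds
  have hsum : α * (SB : ℝ) + β * (SI : ℝ) ≤ (Multiset.card L : ℝ) := by
    have h1 : (L.map fun l => α * ((Bd.filter fun p => l.Mem p).card : ℝ)
        + β * ((I.filter fun p => l.Mem p).card : ℝ)).sum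
        ≤ (L.map fun _ => (1 : ℝ)).sum :=
      Multiset.sum_map_le_sum_map _ _ key
    rw [Multiset.sum_map_add, Multiset.sum_map_mul_left, Multiset.sum_map_mul_left] at h1
    have h2 : (L.map fun _ => (1 : ℝ)).sum = (Multiset.card L : ℝ) := by
      simp [Multiset.map_const', Multiset.sum_replicate]
    rw [h2] at h1
    rw [hSBdef, hSIdef, ← cast_sum_map, ← cast_sum_map]
    exact h1
  -- finish
  have hSBr : (k : ℝ) * (2 * N) ≤ (SB : ℝ) := by
    have := (Nat.cast_le (α := ℝ)).mpr hSB
    rw [Nat.cast_mul, Nat.cast_mul, hcastN] at this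
    calc (k : ℝ) * (2 * N) = (k : ℝ) * ((2 : ℕ) : ℝ) * N := by norm_num; ring
      _ ≤ (SB : ℝ) := by rw [mul_assoc]; exact this
  have hSIr : (k : ℝ) * (N * N) ≤ (SI : ℝ) := by
    have := (Nat.cast_le (α := ℝ)).mpr hSI
    rw [Nat.cast_mul, Nat.cast_mul, hcastN] at this
    exact this
  have e1 : (2 - N / D) * ((k : ℝ) * N) = α * ((k : ℝ) * (2 * N)) + β * ((k : ℝ) * (N * N)) := by
    rw [hαdef, hβdef, hDdef]
    have hD' : 2 * N - (Δ : ℝ) ≠ 0 := by rw [← hDdef]; exact hD.ne'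
    field_simp
    ring
  calc (2 - N / D) * ((k : ℝ) * N)
      = α * ((k : ℝ) * (2 * N)) + β * ((k : ℝ) * (N * N)) := e1
    _ ≤ α * (SB : ℝ) + β * (SI : ℝ) :=
        add_le_add (mul_le_mul_of_nonneg_left hSBr hα) (mul_le_mul_of_nonneg_left hSIr hβ)
    _ ≤ (Multiset.card L : ℝ) := hsum
end

section
/- For every ε > 0 there exists N such that for all integers n ≥ N and k ≥ N, the standard grid Γ_n satisfies cov_k(Γ_n) ≤ (√2 + ε) · k(n−1). -/
open scoped Classical

/-- The standard grid `{0, 1, …, n-1} × {0, 1, …, n-1} ⊆ ℝ²`. -/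
def stdGrid (n : ℕ) : Set (ℝ × ℝ) :=
  {p : ℝ × ℝ | ∃ i < n, ∃ j < n, p = ((i : ℝ), (j : ℝ))}

/-!
Put `m = n - 1` and `T = √2 m`. Take each vertical line `x = c` and horizontal line `y = c`
(`1 ≤ c ≤ m`) with multiplicity `⌈k c / T⌉`, and each line `x + y = c` with multiplicity
`⌈k (T - c) / T⌉₊`, which vanishes for `c ≥ T`. A grid point `(i, j) ≠ 0` then lies on at least
`k i / T + k j / T + k (T - i - j) / T = k` of these lines. Up to `O(k + m)` from the rounding, the
total is `k (m² / T + T / 2)`, which `T = √2 m` minimises to `√2 k m`; and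
`O(k + m) ≤ ε k m` once `k, m ≥ 7 / ε`.
-/

open Finset

theorem Multiset.countP_replicate {α : Type*} (p : α → Prop) [DecidablePred p] (n : ℕ) (a : α) :
    Multiset.countP p (Multiset.replicate n a) = if p a then n else 0 := by
  rw [← Multiset.coe_replicate, Multiset.coe_countP, List.countP_replicate]
  simp

theorem le_ceil_add_ceil_add_ceil {k : ℕ} {x y z : ℝ} (h : k ≤ x + y + z) :
    k ≤ ⌈x⌉₊ + ⌈y⌉₊ + ⌈z⌉₊ := by
  have := h.trans (add_le_add (add_le_add (Nat.le_ceil x) (Nat.le_ceil y)) (Nat.le_ceil z))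
  exact_mod_cast this

theorem sum_range_ceil_mul_le {a : ℝ} (ha : 0 ≤ a) (m : ℕ) :
    ((∑ c ∈ range (m + 1), ⌈a * c⌉₊ : ℕ) : ℝ) ≤ a * (m * (m + 1)) / 2 + (m + 1) := by
  have gauss : (∑ c ∈ range (m + 1), (c : ℝ)) * 2 = (m : ℝ) * (m + 1) := by
    have h : (∑ c ∈ range (m + 1), c) * 2 = m * (m + 1) := by
      rw [sum_range_id_mul_two, add_tsub_cancel_right, mul_comm]
    simpa using congrArg (Nat.cast : ℕ → ℝ) h
  calc ((∑ c ∈ range (m + 1), ⌈a * c⌉₊ : ℕ) : ℝ)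
      ≤ ∑ c ∈ range (m + 1), (a * c + 1) := by
        push_cast
        exact sum_le_sum fun c _ => (Nat.ceil_lt_add_one (by positivity)).le
    _ = a * (m * (m + 1)) / 2 + (m + 1) := by
        rw [sum_add_distrib, ← mul_sum, ← gauss, sum_const, card_range, nsmul_one]
        push_cast
        ring

theorem sum_Icc_max_sub_le {T : ℝ} (hT : 0 ≤ T) (M : ℕ) :
    ∑ c ∈ Icc 1 M, max 0 (T - c) ≤ T ^ 2 / 2 := by
  -- The left side is a Riemann sum of `∫₀ᵀ (T - x) dx`; the square is the part of it still to come.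
  suffices ∀ M : ℕ, ∑ c ∈ Icc 1 M, max 0 (T - c) + max 0 (T - M) ^ 2 / 2 ≤ T ^ 2 / 2 from
    (le_add_of_nonneg_right (by positivity)).trans (this M)
  intro M
  induction M with
  | zero => simp [hT]
  | succ M ih =>
    rw [sum_Icc_succ_top (by omega)]
    suffices max 0 (T - (M + 1)) + max 0 (T - (M + 1)) ^ 2 / 2 ≤ max 0 (T - M) ^ 2 / 2 by
      push_cast; linarith
    rcases le_or_gt (T - M) 1 with h | h
    · rw [max_eq_left (by linarith)]
      linarith [sq_nonneg (max 0 (T - M))]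
    · rw [max_eq_right (by linarith), max_eq_right (by linarith)]
      nlinarith

theorem sum_Icc_ceil_mul_sub_le {a T : ℝ} (ha : 0 ≤ a) (hT : 0 ≤ T) (M : ℕ) :
    ((∑ c ∈ Icc 1 M, ⌈a * (T - c)⌉₊ : ℕ) : ℝ) ≤ a * T ^ 2 / 2 + M := by
  have hterm (c : ℕ) : (⌈a * (T - c)⌉₊ : ℝ) ≤ a * max 0 (T - c) + 1 :=
    calc (⌈a * (T - c)⌉₊ : ℝ) ≤ ⌈a * max 0 (T - c)⌉₊ := by
          gcongr
          exact le_max_right _ _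
      _ ≤ a * max 0 (T - c) + 1 := (Nat.ceil_lt_add_one (by positivity)).le
  calc ((∑ c ∈ Icc 1 M, ⌈a * (T - c)⌉₊ : ℕ) : ℝ)
      ≤ ∑ c ∈ Icc 1 M, (a * max 0 (T - c) + 1) := by
        push_cast
        exact sum_le_sum fun c _ => hterm c
    _ = a * ∑ c ∈ Icc 1 M, max 0 (T - c) + M := by
        rw [sum_add_distrib, ← mul_sum, sum_const, Nat.card_Icc, nsmul_one, add_tsub_cancel_right]
    _ ≤ a * T ^ 2 / 2 + M := by
        rw [mul_div_assoc]
        gcongr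
        exact sum_Icc_max_sub_le hT M

theorem cov_le_card {Γ : Set (ℝ × ℝ)} {k : ℕ} {L : Multiset Line2} (hL : IsKCover Γ k L) :
    cov Γ k ≤ Multiset.card L :=
  Nat.sInf_le ⟨L, hL, rfl⟩

namespace GridCover

def parallelFamily (a b : ℝ) (hab : a ≠ 0 ∨ b ≠ 0) (s : Finset ℕ) (w : ℕ → ℕ) :
    Multiset Line2 :=
  ∑ c ∈ s, Multiset.replicate (w c) ⟨a, b, c, hab⟩

variable {a b : ℝ} {hab : a ≠ 0 ∨ b ≠ 0} {s : Finset ℕ} {w : ℕ → ℕ}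

theorem card_parallelFamily : Multiset.card (parallelFamily a b hab s w) = ∑ c ∈ s, w c := by
  simp [parallelFamily, Multiset.card_sum]

theorem card_filter_mem_parallelFamily {p : ℝ × ℝ} {c₀ : ℕ} (hc₀ : c₀ ∈ s)
    (hp : a * p.1 + b * p.2 = c₀) :
    Multiset.card ((parallelFamily a b hab s w).filter (·.Mem p)) = w c₀ := by
  rw [← Multiset.countP_eq_card_filter, ← Multiset.coe_countPAddMonoidHom, parallelFamily,
    map_sum]
  have hmem (c : ℕ) : (⟨a, b, c, hab⟩ : Line2).Mem p ↔ c₀ = c := by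
    rw [Line2.Mem, hp, Nat.cast_inj]
  simp only [Multiset.coe_countPAddMonoidHom, Multiset.countP_replicate, hmem, sum_ite_eq,
    if_pos hc₀]

theorem not_mem_origin_of_mem_parallelFamily (h0 : 0 ∈ s → w 0 = 0) :
    ∀ l ∈ parallelFamily a b hab s w, ¬ l.Mem (0, 0) := by
  intro l hl hl0
  obtain ⟨c, hc, hl⟩ := Multiset.mem_sum.1 hl
  obtain ⟨hw, rfl⟩ := Multiset.mem_replicate.1 hl
  have hc0 : c = 0 := by simpa [Line2.Mem, eq_comm] using hl0
  subst hc0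
  exact hw (h0 hc)

noncomputable def gridCover (T : ℝ) (m k : ℕ) : Multiset Line2 :=
  parallelFamily 1 0 (Or.inl one_ne_zero) (range (m + 1)) (fun c => ⌈k / T * c⌉₊) +
  parallelFamily 0 1 (Or.inr one_ne_zero) (range (m + 1)) (fun c => ⌈k / T * c⌉₊) +
  parallelFamily 1 1 (Or.inl one_ne_zero) (Icc 1 (2 * m)) (fun c => ⌈k / T * (T - c)⌉₊)

theorem isKCover_gridCover {T : ℝ} (hT : T ≠ 0) (m k : ℕ) :
    IsKCover (stdGrid (m + 1)) k (gridCover T m k) := by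
  constructor
  · intro l hl
    rcases Multiset.mem_add.1 hl with hl | hl
    · rcases Multiset.mem_add.1 hl with hl | hl <;>
        exact not_mem_origin_of_mem_parallelFamily (fun _ => by simp) l hl
    · exact not_mem_origin_of_mem_parallelFamily (fun h => absurd h (by simp)) l hl
  · rintro _ ⟨i, hi, j, hj, rfl⟩ hp0
    have hij : i + j ≠ 0 := fun h => hp0 (by simp [show i = 0 by omega, show j = 0 by omega])
    rw [gridCover, Multiset.filter_add, Multiset.filter_add, Multiset.card_add,
      Multiset.card_add, card_filter_mem_parallelFamily (c₀ := i) (mem_range.2 hi) (by simp),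
      card_filter_mem_parallelFamily (c₀ := j) (mem_range.2 hj) (by simp),
      card_filter_mem_parallelFamily (c₀ := i + j) (mem_Icc.2 ⟨by omega, by omega⟩) (by simp)]
    refine le_ceil_add_ceil_add_ceil (le_of_eq ?_)
    field_simp
    push_cast
    ring

theorem card_gridCover_le {T : ℝ} (hT : 0 < T) (m k : ℕ) :
    (Multiset.card (gridCover T m k) : ℝ) ≤ k * m * (m + 1) / T + k * T / 2 + 4 * m + 2 := by
  have hkT : 0 ≤ (k : ℝ) / T := by positivity
  rw [gridCover, Multiset.card_add, Multiset.card_add, card_parallelFamily, card_parallelFamily,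
    card_parallelFamily]
  have haxis := sum_range_ceil_mul_le hkT m
  have hdiag := sum_Icc_ceil_mul_sub_le hkT hT.le (2 * m)
  push_cast at haxis hdiag ⊢
  calc _ ≤ 2 * (k / T * (m * (m + 1)) / 2 + (m + 1)) + (k / T * T ^ 2 / 2 + 2 * m) := by
        linarith
    _ = _ := by
        field_simp
        ring

theorem cov_stdGrid_succ_le {m : ℕ} (hm : 1 ≤ m) (k : ℕ) :
    (cov (stdGrid (m + 1)) k : ℝ) ≤ √2 * k * m + k + 4 * m + 2 := by
  have hT : 0 < √2 * m := by positivity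
  have hsqrt : √2 ^ 2 = 2 := Real.sq_sqrt zero_le_two
  have hdiv : (k : ℝ) / √2 ≤ k := div_le_self k.cast_nonneg Real.one_lt_sqrt_two.le
  calc (cov (stdGrid (m + 1)) k : ℝ)
      ≤ Multiset.card (gridCover (√2 * m) m k) := by
        exact_mod_cast cov_le_card (isKCover_gridCover hT.ne' m k)
    _ ≤ k * m * (m + 1) / (√2 * m) + k * (√2 * m) / 2 + 4 * m + 2 := card_gridCover_le hT m k
    _ = √2 * k * m + k / √2 + 4 * m + 2 := by
        field_simp
        linear_combination -((k : ℝ) * m) * hsqrt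
    _ ≤ √2 * k * m + k + 4 * m + 2 := by linarith

end GridCover

theorem stmt7 :
    ∀ ε : ℝ, 0 < ε → ∃ N : ℕ, ∀ n : ℕ, N ≤ n → ∀ k : ℕ, N ≤ k →
      (cov (stdGrid n) k : ℝ) ≤ (Real.sqrt 2 + ε) * ((k : ℝ) * ((n : ℝ) - 1)) := by
  intro ε hε
  refine ⟨⌈7 / ε⌉₊ + 2, fun n hn k hk => ?_⟩
  have large (j : ℕ) (hj : ⌈7 / ε⌉₊ ≤ j) : 7 ≤ ε * j :=
    (div_le_iff₀' hε).1 ((Nat.le_ceil _).trans (by exact_mod_cast hj))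
  obtain ⟨m, rfl⟩ : ∃ m, n = m + 1 := ⟨n - 1, by omega⟩
  have hm : (1 : ℝ) ≤ m := by exact_mod_cast (by omega : 1 ≤ m)
  have hεm := large m (by omega)
  have hεk := large k (by omega)
  calc (cov (stdGrid (m + 1)) k : ℝ) ≤ √2 * k * m + k + 4 * m + 2 :=
        GridCover.cov_stdGrid_succ_le (by omega) k
    _ ≤ (√2 + ε) * (k * ((m + 1 : ℕ) - 1)) := by
        push_cast
        nlinarith
end

section
/- Let S₁, S₂ ⊆ ℝ be finite sets with 0 ∈ S₁ ∩ S₂, let Γ = S₁ × S₂ ⊆ ℝ², and let w : ℝ² → ℝ be a nonnegative function vanishing outside Γ \ {(0,0)}. Suppose that for every affine line ℓ in ℝ² not passing through the origin, the sum of w over the points of ℓ ∩ (Γ \ {(0,0)}) is at most 1. Then for every integer k ≥ 1, every k-cover of Γ has cardinality at least k · Σ_{p ∈ Γ \ {(0,0)}} w(p). -/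
open scoped Classical

open Classical in
lemma sum_map_sum_comm {α β : Type*} [DecidableEq β] (L : Multiset α) (G : Finset β)
    (g : α → β → ℝ) :
    (L.map (fun l => ∑ p ∈ G, g l p)).sum = ∑ p ∈ G, (L.map (fun l => g l p)).sum := by
  induction L using Multiset.induction with
  | empty => simp
  | cons a s ih => simp [ih, Finset.sum_add_distrib]

open Classical in
lemma sum_map_ite {α : Type*} (L : Multiset α) (P : α → Prop) [DecidablePred P] (c : ℝ) :
    (L.map (fun l => if P l then c else 0)).sum = c * (L.filter P).card := by
  induction L using Multiset.induction with
  | empty => simp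
  | cons a s ih =>
    by_cases h : P a <;> simp [h, ih] <;> ring

theorem stmt9 (S₁ S₂ : Finset ℝ)
    (h0₁ : (0 : ℝ) ∈ S₁) (h0₂ : (0 : ℝ) ∈ S₂)
    (w : ℝ × ℝ → ℝ) (hw0 : ∀ p, 0 ≤ w p)
    (hsupp : ∀ p : ℝ × ℝ,
      p ∉ ((↑(S₁ ×ˢ S₂) : Set (ℝ × ℝ)) \ {(0, 0)}) → w p = 0)
    (hline : ∀ l : Line2, ¬ l.Mem (0, 0) →
      ∑ p ∈ (S₁ ×ˢ S₂).filter (fun p => p ≠ (0, 0) ∧ l.Mem p), w p ≤ 1)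
    (k : ℕ) (hk : 1 ≤ k) (L : Multiset Line2)
    (hL : IsKCover (↑(S₁ ×ˢ S₂)) k L) :
    (k : ℝ) * ∑ p ∈ (S₁ ×ˢ S₂).erase (0, 0), w p ≤ (Multiset.card L : ℝ) := by
  classical
  set G := (S₁ ×ˢ S₂).erase (0, 0) with hG
  have key : ∀ p ∈ G, (k : ℝ) * w p ≤ ((L.filter (fun l => l.Mem p)).card : ℝ) * w p := by
    intro p hp
    have hpG : p ∈ (S₁ ×ˢ S₂) := Finset.mem_of_mem_erase hp
    have hpne : p ≠ (0, 0) := Finset.ne_of_mem_erase hp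
    have := hL.2 p (by exact_mod_cast hpG) hpne
    exact mul_le_mul_of_nonneg_right (by exact_mod_cast this) (hw0 p)
  calc (k : ℝ) * ∑ p ∈ G, w p
      = ∑ p ∈ G, (k : ℝ) * w p := by rw [Finset.mul_sum]
    _ ≤ ∑ p ∈ G, ((L.filter (fun l => l.Mem p)).card : ℝ) * w p :=
        Finset.sum_le_sum key
    _ = ∑ p ∈ G, (L.map (fun l => if l.Mem p then w p else 0)).sum := by
        refine Finset.sum_congr rfl fun p _ => ?_
        rw [sum_map_ite, mul_comm]
    _ = (L.map (fun l => ∑ p ∈ G, if l.Mem p then w p else 0)).sum := by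
        rw [sum_map_sum_comm]
    _ ≤ (L.map (fun _ => (1 : ℝ))).sum := by
        apply Multiset.sum_map_le_sum_map
        intro l hl
        have hnot := hL.1 l hl
        have := hline l hnot
        calc (∑ p ∈ G, if l.Mem p then w p else 0)
            = ∑ p ∈ (S₁ ×ˢ S₂).filter (fun p => p ≠ (0, 0) ∧ l.Mem p), w p := by
              rw [← Finset.sum_filter]
              apply Finset.sum_congr _ (fun _ _ => rfl)
              ext p
              simp only [hG, Finset.mem_filter, Finset.mem_erase]
              tauto
          _ ≤ 1 := this
    _ = (Multiset.card L : ℝ) := by simp [Multiset.map_const']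
end

section
/- For n ≥ 2, let E_n = {0} ∪ {2^i : 0 ≤ i ≤ n−2} ⊆ ℝ (so |E_n| = n) and let Γ_exp,n = E_n × E_n ⊆ ℝ². Then for every ε > 0 there exists N such that for all integers n ≥ N and k ≥ N, (3/2 − ε) · k(n−1) ≤ cov_k(Γ_exp,n) ≤ (3/2 + ε) · k(n−1). -/
open scoped Classical

/-- The set `{0} ∪ {2^i : 0 ≤ i ≤ n-2} ⊆ ℝ`. -/
noncomputable def expSet (n : ℕ) : Finset ℝ :=
  insert 0 ((Finset.range (n - 1)).image (fun i => (2 : ℝ) ^ i))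

example (a : ℕ) : (1:ℕ) ≤ 2^a := Nat.one_le_two_pow

lemma two_eq : ∀ N a b c d : ℕ, a + b + c + d ≤ N →
    2^a + 2^b = 2^c + 2^d → (a = c ∧ b = d) ∨ (a = d ∧ b = c) := by
  intro N
  induction N with
  | zero => intro a b c d hN h; left; omega
  | succ N IH =>
    intro a b c d hN h
    rcases a with _|a <;> rcases b with _|b <;> rcases c with _|c <;> rcases d with _|d <;>
      simp only [pow_succ, pow_zero] at h <;>
    · try have h1 : (1:ℕ) ≤ 2^a := Nat.one_le_two_pow
      try have h2 : (1:ℕ) ≤ 2^b := Nat.one_le_two_pow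
      try have h3 : (1:ℕ) ≤ 2^c := Nat.one_le_two_pow
      try have h4 : (1:ℕ) ≤ 2^d := Nat.one_le_two_pow
      first
      | omega
      | { have he : 2^a + 2^b = 2^c + 2^d := by omega
          have := IH a b c d (by omega) he
          omega }
      | { have he : (2:ℕ)^a = 2^c := by omega
          have := Nat.pow_right_injective (le_refl 2) he
          omega }
      | { have he : (2:ℕ)^a = 2^d := by omega
          have := Nat.pow_right_injective (le_refl 2) he
          omega }
      | { have he : (2:ℕ)^b = 2^c := by omega
          have := Nat.pow_right_injective (le_refl 2) he
          omega }
      | { have he : (2:ℕ)^b = 2^d := by omega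
          have := Nat.pow_right_injective (le_refl 2) he
          omega }
set_option maxHeartbeats 2000000 in

lemma three_mem : ∀ N a b c d e f : ℕ, a + b + c + d + e + f ≤ N →
    2^a + 2^b + 2^c = 2^d + 2^e + 2^f → a + b + c = d + e + f →
    a = d ∨ a = e ∨ a = f := by
  intro N
  induction N with
  | zero => intro a b c d e f hN h hs; left; omega
  | succ N IH =>
    intro a b c d e f hN h hs
    rcases a with _|a <;> rcases b with _|b <;> rcases c with _|c <;>
      rcases d with _|d <;> rcases e with _|e <;> rcases f with _|f <;>
      simp only [pow_succ, pow_zero] at h <;>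
    · try have p1 : (1:ℕ) ≤ 2^a := Nat.one_le_two_pow
      try have p2 : (1:ℕ) ≤ 2^b := Nat.one_le_two_pow
      try have p3 : (1:ℕ) ≤ 2^c := Nat.one_le_two_pow
      try have p4 : (1:ℕ) ≤ 2^d := Nat.one_le_two_pow
      try have p5 : (1:ℕ) ≤ 2^e := Nat.one_le_two_pow
      try have p6 : (1:ℕ) ≤ 2^f := Nat.one_le_two_pow
      first
      | omega
      | { -- all positive: recurse
          have he : 2^a + 2^b + 2^c = 2^d + 2^e + 2^f := by omega
          have := IH a b c d e f (by omega) he (by omega)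
          omega }
      | { have he : 2^a + 2^b = 2^d + 2^e := by omega
          have := two_eq (a+b+d+e) a b d e (le_refl _) he; omega }
      | { have he : 2^a + 2^b = 2^d + 2^f := by omega
          have := two_eq (a+b+d+f) a b d f (le_refl _) he; omega }
      | { have he : 2^a + 2^b = 2^e + 2^f := by omega
          have := two_eq (a+b+e+f) a b e f (le_refl _) he; omega }
      | { have he : 2^a + 2^c = 2^d + 2^e := by omega
          have := two_eq (a+c+d+e) a c d e (le_refl _) he; omega }
      | { have he : 2^a + 2^c = 2^d + 2^f := by omega
          have := two_eq (a+c+d+f) a c d f (le_refl _) he; omega }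
      | { have he : 2^a + 2^c = 2^e + 2^f := by omega
          have := two_eq (a+c+e+f) a c e f (le_refl _) he; omega }
      | { have he : (2:ℕ)^a = 2^d := by omega
          have := Nat.pow_right_injective (le_refl 2) he; omega }
      | { have he : (2:ℕ)^a = 2^e := by omega
          have := Nat.pow_right_injective (le_refl 2) he; omega }
      | { have he : (2:ℕ)^a = 2^f := by omega
          have := Nat.pow_right_injective (le_refl 2) he; omega }
      | { -- LHS = {x, 0, 0}, RHS all positive
          first
          | { have m4 : (2:ℕ)^a = 4 * 2^(d+e+f) := by
                rw [show a = (d+e+f)+2 by omega, pow_add]; ring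
              have m1 : (2:ℕ)^d ≤ 2^(d+e+f) := Nat.pow_le_pow_right (by norm_num) (by omega)
              have m2 : (2:ℕ)^e ≤ 2^(d+e+f) := Nat.pow_le_pow_right (by norm_num) (by omega)
              have m3 : (2:ℕ)^f ≤ 2^(d+e+f) := Nat.pow_le_pow_right (by norm_num) (by omega)
              omega }
          | { have m4 : (2:ℕ)^b = 4 * 2^(d+e+f) := by
                rw [show b = (d+e+f)+2 by omega, pow_add]; ring
              have m1 : (2:ℕ)^d ≤ 2^(d+e+f) := Nat.pow_le_pow_right (by norm_num) (by omega)
              have m2 : (2:ℕ)^e ≤ 2^(d+e+f) := Nat.pow_le_pow_right (by norm_num) (by omega)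
              have m3 : (2:ℕ)^f ≤ 2^(d+e+f) := Nat.pow_le_pow_right (by norm_num) (by omega)
              omega }
          | { have m4 : (2:ℕ)^c = 4 * 2^(d+e+f) := by
                rw [show c = (d+e+f)+2 by omega, pow_add]; ring
              have m1 : (2:ℕ)^d ≤ 2^(d+e+f) := Nat.pow_le_pow_right (by norm_num) (by omega)
              have m2 : (2:ℕ)^e ≤ 2^(d+e+f) := Nat.pow_le_pow_right (by norm_num) (by omega)
              have m3 : (2:ℕ)^f ≤ 2^(d+e+f) := Nat.pow_le_pow_right (by norm_num) (by omega)
              omega } }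
      | { -- RHS = {y, 0, 0}, LHS all positive
          first
          | { have m4 : (2:ℕ)^d = 4 * 2^(a+b+c) := by
                rw [show d = (a+b+c)+2 by omega, pow_add]; ring
              have m1 : (2:ℕ)^a ≤ 2^(a+b+c) := Nat.pow_le_pow_right (by norm_num) (by omega)
              have m2 : (2:ℕ)^b ≤ 2^(a+b+c) := Nat.pow_le_pow_right (by norm_num) (by omega)
              have m3 : (2:ℕ)^c ≤ 2^(a+b+c) := Nat.pow_le_pow_right (by norm_num) (by omega)
              omega }
          | { have m4 : (2:ℕ)^e = 4 * 2^(a+b+c) := by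
                rw [show e = (a+b+c)+2 by omega, pow_add]; ring
              have m1 : (2:ℕ)^a ≤ 2^(a+b+c) := Nat.pow_le_pow_right (by norm_num) (by omega)
              have m2 : (2:ℕ)^b ≤ 2^(a+b+c) := Nat.pow_le_pow_right (by norm_num) (by omega)
              have m3 : (2:ℕ)^c ≤ 2^(a+b+c) := Nat.pow_le_pow_right (by norm_num) (by omega)
              omega }
          | { have m4 : (2:ℕ)^f = 4 * 2^(a+b+c) := by
                rw [show f = (a+b+c)+2 by omega, pow_add]; ring
              have m1 : (2:ℕ)^a ≤ 2^(a+b+c) := Nat.pow_le_pow_right (by norm_num) (by omega)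
              have m2 : (2:ℕ)^b ≤ 2^(a+b+c) := Nat.pow_le_pow_right (by norm_num) (by omega)
              have m3 : (2:ℕ)^c ≤ 2^(a+b+c) := Nat.pow_le_pow_right (by norm_num) (by omega)
              omega } }


noncomputable def vlin (i : ℕ) : Line2 := ⟨1, 0, 2^i, Or.inl one_ne_zero⟩
noncomputable def hlin (i : ℕ) : Line2 := ⟨0, 1, 2^i, Or.inr one_ne_zero⟩
noncomputable def dlin (i : ℕ) : Line2 := ⟨1, 1, 2^i, Or.inl one_ne_zero⟩

noncomputable def chunk (m i : ℕ) : Multiset Line2 :=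
  Multiset.replicate m (vlin i) + (Multiset.replicate m (hlin i) + Multiset.replicate m (dlin i))

noncomputable def UB (n m : ℕ) : Multiset Line2 := ∑ i ∈ Finset.range (n-1), chunk m i

lemma card_filter_replicate {α : Type*} (P : α → Prop) [DecidablePred P] (m : ℕ) (x : α) :
    ((Multiset.replicate m x).filter P).card = if P x then m else 0 := by
  split_ifs with h
  · rw [Multiset.filter_eq_self.2 fun b hb => by rwa [Multiset.eq_of_mem_replicate hb]]
    exact Multiset.card_replicate _ _
  · rw [Multiset.filter_eq_nil.2 fun b hb => by rwa [Multiset.eq_of_mem_replicate hb]]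
    rfl

lemma card_filter_sum {ι α : Type*} (P : α → Prop) [DecidablePred P] (s : Finset ι)
    (f : ι → Multiset α) :
    (((∑ i ∈ s, f i)).filter P).card = ∑ i ∈ s, ((f i).filter P).card := by
  classical
  induction s using Finset.induction with
  | empty => simp
  | @insert a s ha ih => rw [Finset.sum_insert ha, Finset.sum_insert ha,
      Multiset.filter_add, Multiset.card_add, ih]

lemma card_sum {ι α : Type*} (s : Finset ι) (f : ι → Multiset α) :
    (∑ i ∈ s, f i).card = ∑ i ∈ s, (f i).card := by
  classical
  induction s using Finset.induction with
  | empty => simp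
  | @insert a s ha ih => rw [Finset.sum_insert ha, Finset.sum_insert ha,
      Multiset.card_add, ih]

lemma UB_card (n m : ℕ) : (UB n m).card = (n-1) * (3*m) := by
  rw [UB, card_sum]
  have : ∀ i, (chunk m i).card = 3*m := by
    intro i; simp [chunk, Multiset.card_replicate]; ring
  simp [this, Finset.sum_const, mul_comm]

lemma two_pow_injR : Function.Injective (fun i : ℕ => (2:ℝ)^i) :=
  pow_right_injective₀ (by norm_num) (by norm_num)

lemma mem_expSet {n : ℕ} {x : ℝ} : x ∈ expSet n ↔ x = 0 ∨ ∃ i < n-1, (2:ℝ)^i = x := by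
  simp [expSet, Finset.mem_insert, Finset.mem_image, Finset.mem_range]

lemma UB_isKCover (n k : ℕ) (hk : k ≤ 2*((k+1)/2)) :
    IsKCover (↑(expSet n ×ˢ expSet n)) k (UB n ((k+1)/2)) := by
  set m := (k+1)/2 with hm
  constructor
  · intro l hl
    rw [UB] at hl
    obtain ⟨i, -, hi⟩ := Multiset.mem_sum.1 hl
    have hc : l.c = 2^i := by
      simp only [chunk, Multiset.mem_add] at hi
      rcases hi with h | h | h <;>
        · have := Multiset.eq_of_mem_replicate h
          subst this; rfl
    intro hmem
    simp only [Line2.Mem] at hmem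
    have : l.c = 0 := by simpa using hmem.symm
    rw [hc] at this
    exact (pow_ne_zero i two_ne_zero) this
  · intro p hp hne
    have hp' : p.1 ∈ expSet n ∧ p.2 ∈ expSet n := by
      have := Finset.mem_coe.1 hp
      exact Finset.mem_product.1 this
    classical
    rw [UB, card_filter_sum]
    have chunkcnt : ∀ i, ((chunk m i).filter (fun l => l.Mem p)).card =
        (if (vlin i).Mem p then m else 0) + ((if (hlin i).Mem p then m else 0)
          + (if (dlin i).Mem p then m else 0)) := by
      intro i
      simp [chunk, Multiset.filter_add, Multiset.card_add, card_filter_replicate]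
    rcases mem_expSet.1 hp'.1 with hx0 | ⟨i, hi, hxi⟩ <;>
      rcases mem_expSet.1 hp'.2 with hy0 | ⟨j, hj, hyj⟩
    · exact absurd (Prod.ext hx0 hy0) hne
    · -- p = (0, 2^j) : hline j and dline j
      calc k ≤ 2*m := hk
        _ ≤ ((chunk m j).filter (fun l => l.Mem p)).card := by
            rw [chunkcnt j]
            have h1 : (hlin j).Mem p := by simp [hlin, Line2.Mem, hx0, ← hyj]
            have h2 : (dlin j).Mem p := by simp [dlin, Line2.Mem, hx0, ← hyj]
            simp [h1, h2]; omega
        _ ≤ _ := Finset.single_le_sum (f := fun i => ((chunk m i).filter (fun l => l.Mem p)).card)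
              (fun _ _ => Nat.zero_le _) (Finset.mem_range.2 hj)
    · -- p = (2^i, 0)
      calc k ≤ 2*m := hk
        _ ≤ ((chunk m i).filter (fun l => l.Mem p)).card := by
            rw [chunkcnt i]
            have h1 : (vlin i).Mem p := by simp [vlin, Line2.Mem, hy0, ← hxi]
            have h2 : (dlin i).Mem p := by simp [dlin, Line2.Mem, hy0, ← hxi]
            simp [h1, h2]; omega
        _ ≤ _ := Finset.single_le_sum (f := fun i => ((chunk m i).filter (fun l => l.Mem p)).card)
              (fun _ _ => Nat.zero_le _) (Finset.mem_range.2 hi)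
    · -- p = (2^i, 2^j)
      have h1 : (vlin i).Mem p := by simp [vlin, Line2.Mem, ← hxi]
      have h2 : (hlin j).Mem p := by simp [hlin, Line2.Mem, ← hyj]
      by_cases hij : i = j
      · subst hij
        calc k ≤ 2*m := hk
          _ ≤ ((chunk m i).filter (fun l => l.Mem p)).card := by
              rw [chunkcnt i]; simp [h1, h2]; omega
          _ ≤ _ := Finset.single_le_sum (f := fun i => ((chunk m i).filter (fun l => l.Mem p)).card)
                (fun _ _ => Nat.zero_le _) (Finset.mem_range.2 hi)
      · calc k ≤ 2*m := hk
          _ ≤ ((chunk m i).filter (fun l => l.Mem p)).card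
              + ((chunk m j).filter (fun l => l.Mem p)).card := by
              rw [chunkcnt i, chunkcnt j]; simp [h1, h2]; omega
          _ = ∑ t ∈ ({i, j} : Finset ℕ), ((chunk m t).filter (fun l => l.Mem p)).card :=
              (Finset.sum_pair (f := fun t => ((chunk m t).filter (fun l => l.Mem p)).card) hij).symm
          _ ≤ _ := Finset.sum_le_sum_of_subset (by
              intro t ht
              simp only [Finset.mem_insert, Finset.mem_singleton] at ht
              rcases ht with rfl | rfl
              · exact Finset.mem_range.2 hi
              · exact Finset.mem_range.2 hj)

lemma cov_upper (n k : ℕ) : cov (↑(expSet n ×ˢ expSet n)) k ≤ (n-1) * (3*((k+1)/2)) := by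
  apply Nat.sInf_le
  exact ⟨UB n ((k+1)/2), UB_isKCover n k (by omega), UB_card n _⟩

noncomputable def Ey (n : ℕ) : Finset ℝ := (Finset.range (n-1)).image (fun i => (2:ℝ)^i)
noncomputable def AxF (n : ℕ) : Finset (ℝ×ℝ) := (Ey n).image (fun x => (x, (0:ℝ)))
noncomputable def AyF (n : ℕ) : Finset (ℝ×ℝ) := (Ey n).image (fun y => ((0:ℝ), y))
noncomputable def AF (n : ℕ) : Finset (ℝ×ℝ) := AxF n ∪ AyF n
noncomputable def BF (n : ℕ) : Finset (ℝ×ℝ) := (Ey n) ×ˢ (Ey n)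

lemma mem_Ey {n : ℕ} {x : ℝ} : x ∈ Ey n ↔ ∃ i < n-1, (2:ℝ)^i = x := by
  simp [Ey, Finset.mem_image, Finset.mem_range]

lemma Ey_pos {n : ℕ} {x : ℝ} (hx : x ∈ Ey n) : 0 < x := by
  obtain ⟨i, -, rfl⟩ := mem_Ey.1 hx
  positivity

lemma Ey_card (n : ℕ) : (Ey n).card = n - 1 := by
  rw [Ey, Finset.card_image_of_injective _ two_pow_injR, Finset.card_range]

lemma AF_card (n : ℕ) : (AF n).card = 2 * (n-1) := by
  rw [AF, Finset.card_union_of_disjoint, AxF, AyF,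
    Finset.card_image_of_injective _ (fun x y h => (Prod.ext_iff.1 h).1),
    Finset.card_image_of_injective _ (fun x y h => (Prod.ext_iff.1 h).2), Ey_card]
  · ring
  · rw [Finset.disjoint_left]
    rintro p hp hq
    rw [AxF, Finset.mem_image] at hp
    rw [AyF, Finset.mem_image] at hq
    obtain ⟨x, hx, rfl⟩ := hp
    obtain ⟨y, hy, hxy⟩ := hq
    have : x = 0 := by simpa using (Prod.ext_iff.1 hxy).1.symm
    exact (Ey_pos hx).ne' this

lemma BF_card (n : ℕ) : (BF n).card = (n-1) * (n-1) := by
  rw [BF, Finset.card_product, Ey_card]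

lemma origin_c {l : Line2} (h : ¬ l.Mem (0,0)) : l.c ≠ 0 := by
  intro hc; exact h (by simp [Line2.Mem, hc])

-- double counting
lemma count_swap (L : Multiset Line2) (A : Finset (ℝ×ℝ)) :
    ∑ p ∈ A, (L.filter (fun l => l.Mem p)).card
      = (L.map (fun l => (A.filter (fun p => l.Mem p)).card)).sum := by
  induction L using Multiset.induction with
  | empty => simp
  | cons l L ih =>
    simp only [Multiset.filter_cons, Multiset.card_add, Multiset.map_cons, Multiset.sum_cons]
    rw [Finset.sum_add_distrib, ih]
    congr 1
    rw [Finset.card_filter]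
    apply Finset.sum_congr rfl
    intro p hp
    split_ifs <;> simp

-- per-line bounds on axis points
lemma axis_x_le_one {l : Line2} (hc : l.c ≠ 0) (n : ℕ) :
    ((AxF n).filter (fun p => l.Mem p)).card ≤ 1 := by
  rw [Finset.card_le_one]
  intro p hp q hq
  simp only [Finset.mem_filter, AxF, Finset.mem_image] at hp hq
  obtain ⟨⟨x, hx, rfl⟩, hpl⟩ := hp
  obtain ⟨⟨y, hy, rfl⟩, hql⟩ := hq
  simp only [Line2.Mem] at hpl hql
  have ha : l.a ≠ 0 := by
    intro h0; rw [h0] at hpl; simp at hpl; exact hc hpl.symm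
  have : x = y := by
    have : l.a * x = l.a * y := by linarith
    exact mul_left_cancel₀ ha this
  rw [this]

lemma axis_y_le_one {l : Line2} (hc : l.c ≠ 0) (n : ℕ) :
    ((AyF n).filter (fun p => l.Mem p)).card ≤ 1 := by
  rw [Finset.card_le_one]
  intro p hp q hq
  simp only [Finset.mem_filter, AyF, Finset.mem_image] at hp hq
  obtain ⟨⟨x, hx, rfl⟩, hpl⟩ := hp
  obtain ⟨⟨y, hy, rfl⟩, hql⟩ := hq
  simp only [Line2.Mem] at hpl hql
  have hb : l.b ≠ 0 := by
    intro h0; rw [h0] at hpl; simp at hpl; exact hc hpl.symm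
  have : x = y := by
    have : l.b * x = l.b * y := by linarith
    exact mul_left_cancel₀ hb this
  rw [this]

lemma axis_y_vert {l : Line2} (hc : l.c ≠ 0) (hb : l.b = 0) (n : ℕ) :
    ((AyF n).filter (fun p => l.Mem p)).card = 0 := by
  rw [Finset.card_eq_zero, Finset.filter_eq_empty_iff]
  intro p hp
  simp only [AyF, Finset.mem_image] at hp
  obtain ⟨y, hy, rfl⟩ := hp
  simp [Line2.Mem, hb]
  intro h; exact hc h.symm

lemma axis_x_horiz {l : Line2} (hc : l.c ≠ 0) (ha : l.a = 0) (n : ℕ) :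
    ((AxF n).filter (fun p => l.Mem p)).card = 0 := by
  rw [Finset.card_eq_zero, Finset.filter_eq_empty_iff]
  intro p hp
  simp only [AxF, Finset.mem_image] at hp
  obtain ⟨x, hx, rfl⟩ := hp
  simp [Line2.Mem, ha]
  intro h; exact hc h.symm

lemma axis_union_card {l : Line2} (n : ℕ) :
    ((AF n).filter (fun p => l.Mem p)).card ≤
      ((AxF n).filter (fun p => l.Mem p)).card + ((AyF n).filter (fun p => l.Mem p)).card := by
  rw [AF, Finset.filter_union]
  exact Finset.card_union_le _ _

-- per-line bounds on interior points
lemma int_vert {l : Line2} (hb : l.b = 0) (n : ℕ) :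
    ((BF n).filter (fun p => l.Mem p)).card ≤ n - 1 := by
  have ha : l.a ≠ 0 := l.nondeg.resolve_right (fun h => h hb)
  rw [← Ey_card n]
  apply Finset.card_le_card_of_injOn (fun p => p.2)
  · intro p hp
    simp only [Finset.coe_filter, Set.mem_setOf_eq, Finset.mem_coe, Finset.mem_filter, BF, Finset.mem_product] at hp
    exact hp.1.2
  · intro p hp q hq h2
    simp only [Finset.coe_filter, Set.mem_setOf_eq, BF, Finset.mem_product] at hp hq
    have hpl := hp.2; have hql := hq.2
    simp only [Line2.Mem, hb, zero_mul, add_zero] at hpl hql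
    have : p.1 = q.1 := mul_left_cancel₀ ha (by rw [hpl, hql])
    exact Prod.ext this h2

lemma int_horiz {l : Line2} (ha : l.a = 0) (n : ℕ) :
    ((BF n).filter (fun p => l.Mem p)).card ≤ n - 1 := by
  have hb : l.b ≠ 0 := l.nondeg.resolve_left (fun h => h ha)
  rw [← Ey_card n]
  apply Finset.card_le_card_of_injOn (fun p => p.1)
  · intro p hp
    simp only [Finset.coe_filter, Set.mem_setOf_eq, Finset.mem_coe, Finset.mem_filter, BF, Finset.mem_product] at hp
    exact hp.1.1
  · intro p hp q hq h1
    simp only [Finset.coe_filter, Set.mem_setOf_eq, BF, Finset.mem_product] at hp hq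
    have hpl := hp.2; have hql := hq.2
    simp only [Line2.Mem, ha, zero_mul, zero_add] at hpl hql
    have : p.2 = q.2 := mul_left_cancel₀ hb (by rw [hpl, hql])
    exact Prod.ext h1 this

lemma int_slant {l : Line2} (hc : l.c ≠ 0) (ha : l.a ≠ 0) (hb : l.b ≠ 0) (n : ℕ) :
    ((BF n).filter (fun p => l.Mem p)).card ≤ 2 := by
  by_contra hcon
  push_neg at hcon
  obtain ⟨p, hp, q, hq, r, hr, hpq, hpr, hqr⟩ := Finset.two_lt_card.1 hcon
  simp only [Finset.mem_filter, BF, Finset.mem_product] at hp hq hr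
  obtain ⟨⟨hp1, hp2⟩, hpl⟩ := hp
  obtain ⟨⟨hq1, hq2⟩, hql⟩ := hq
  obtain ⟨⟨hr1, hr2⟩, hrl⟩ := hr
  obtain ⟨i1, -, hx1⟩ := mem_Ey.1 hp1
  obtain ⟨j1, -, hy1⟩ := mem_Ey.1 hp2
  obtain ⟨i2, -, hx2⟩ := mem_Ey.1 hq1
  obtain ⟨j2, -, hy2⟩ := mem_Ey.1 hq2
  obtain ⟨i3, -, hx3⟩ := mem_Ey.1 hr1
  obtain ⟨j3, -, hy3⟩ := mem_Ey.1 hr2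
  simp only [Line2.Mem] at hpl hql hrl
  rw [← hx1, ← hy1] at hpl
  rw [← hx2, ← hy2] at hql
  rw [← hx3, ← hy3] at hrl
  -- distinctness of exponents
  have hij : ∀ (a b c d : ℕ), l.a * 2^a + l.b * 2^b = l.c → l.a * 2^c + l.b * 2^d = l.c →
      a = c → b = d := by
    intro a b c d h1 h2 hac
    subst hac
    have : l.b * (2:ℝ)^b = l.b * 2^d := by linarith
    exact two_pow_injR (mul_left_cancel₀ hb this)
  have hji : ∀ (a b c d : ℕ), l.a * 2^a + l.b * 2^b = l.c → l.a * 2^c + l.b * 2^d = l.c →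
      b = d → a = c := by
    intro a b c d h1 h2 hbd
    subst hbd
    have : l.a * (2:ℝ)^a = l.a * 2^c := by linarith
    exact two_pow_injR (mul_left_cancel₀ ha this)
  have hne : ∀ (a b c d : ℕ), l.a * 2^a + l.b * 2^b = l.c → l.a * 2^c + l.b * 2^d = l.c →
      ((2:ℝ)^a, (2:ℝ)^b) ≠ ((2:ℝ)^c, (2:ℝ)^d) → a ≠ c ∧ b ≠ d := by
    intro a b c d h1 h2 hnep
    constructor
    · intro hac
      exact hnep (by rw [hac, hij a b c d h1 h2 hac])
    · intro hbd
      exact hnep (by rw [hbd, hji a b c d h1 h2 hbd])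
  have hpq' : ((2:ℝ)^i1, (2:ℝ)^j1) ≠ ((2:ℝ)^i2, (2:ℝ)^j2) := by
    rw [hx1, hy1, hx2, hy2]; simpa [Prod.ext_iff] using fun h1 h2 => hpq (Prod.ext h1 h2)
  have hpr' : ((2:ℝ)^i1, (2:ℝ)^j1) ≠ ((2:ℝ)^i3, (2:ℝ)^j3) := by
    rw [hx1, hy1, hx3, hy3]; simpa [Prod.ext_iff] using fun h1 h2 => hpr (Prod.ext h1 h2)
  have hqr' : ((2:ℝ)^i2, (2:ℝ)^j2) ≠ ((2:ℝ)^i3, (2:ℝ)^j3) := by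
    rw [hx2, hy2, hx3, hy3]; simpa [Prod.ext_iff] using fun h1 h2 => hqr (Prod.ext h1 h2)
  obtain ⟨hi12, hj12⟩ := hne _ _ _ _ hpl hql hpq'
  obtain ⟨hi13, hj13⟩ := hne _ _ _ _ hpl hrl hpr'
  obtain ⟨hi23, hj23⟩ := hne _ _ _ _ hql hrl hqr'
  -- collinearity identity
  have E12 : l.a * ((2:ℝ)^i1 - 2^i2) = l.b * ((2:ℝ)^j2 - 2^j1) := by
    linear_combination hpl - hql
  have E13 : l.a * ((2:ℝ)^i1 - 2^i3) = l.b * ((2:ℝ)^j3 - 2^j1) := by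
    linear_combination hpl - hrl
  have key : l.a * (((2:ℝ)^i1 - 2^i2) * ((2:ℝ)^j3 - 2^j1)
      - ((2:ℝ)^i1 - 2^i3) * ((2:ℝ)^j2 - 2^j1)) = 0 := by
    linear_combination ((2:ℝ)^j3 - 2^j1) * E12 - ((2:ℝ)^j2 - 2^j1) * E13
  have key2 : ((2:ℝ)^i1 - 2^i2) * ((2:ℝ)^j3 - 2^j1)
      = ((2:ℝ)^i1 - 2^i3) * ((2:ℝ)^j2 - 2^j1) := by
    have := mul_eq_zero.1 key
    rcases this with h | h
    · exact absurd h ha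
    · linarith
  have hR : (2:ℝ)^(i1+j3) + 2^(i2+j1) + 2^(i3+j2) = 2^(i1+j2) + 2^(i2+j3) + 2^(i3+j1) := by
    simp only [pow_add]
    linear_combination key2
  have hNat : 2^(i1+j3) + 2^(i2+j1) + 2^(i3+j2) = 2^(i1+j2) + 2^(i2+j3) + 2^(i3+j1) := by
    exact_mod_cast hR
  have := three_mem ((i1+j3)+(i2+j1)+(i3+j2)+((i1+j2)+(i2+j3)+(i3+j1)))
    (i1+j3) (i2+j1) (i3+j2) (i1+j2) (i2+j3) (i3+j1) (by omega) hNat (by omega)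
  rcases this with h | h | h
  · exact hj23 (by omega)
  · exact hi12 (by omega)
  · -- i1 + j3 = i3 + j1 : line passes through origin
    have hpow : (2:ℝ)^j1 * 2^i3 = 2^j3 * 2^i1 := by
      rw [← pow_add, ← pow_add]; congr 1; omega
    have hc0 : l.c * ((2:ℝ)^i3 - 2^i1) = 0 := by
      linear_combination (2:ℝ)^i1 * hrl - (2:ℝ)^i3 * hpl + l.b * hpow
    rcases mul_eq_zero.1 hc0 with h' | h'
    · exact hc h'
    · have : (2:ℝ)^i3 = 2^i1 := by linarith
      exact hi13 (two_pow_injR this).symm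


lemma sum_filter_le (L : Multiset Line2) (w : Line2 → ℕ) (t : ℕ) (h : ∀ l ∈ L, w l ≤ t) :
    (L.map w).sum ≤ L.card * t := by
  have := Multiset.sum_le_card_nsmul (L.map w) t (by
    intro x hx
    obtain ⟨l, hl, rfl⟩ := Multiset.mem_map.1 hx
    exact h l hl)
  simpa [Multiset.card_map, smul_eq_mul] using this

lemma master (n k : ℕ) (L : Multiset Line2) (hL : IsKCover (↑(expSet n ×ˢ expSet n)) k L) :
    ∃ V H S : ℕ, L.card = V + H + S ∧ k * (2*(n-1)) ≤ V + H + 2*S ∧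
      k * ((n-1)*(n-1)) ≤ (V + H) * (n-1) + 2*S := by
  classical
  obtain ⟨h0, hcov⟩ := hL
  have hcne : ∀ l ∈ L, l.c ≠ 0 := fun l hl => origin_c (h0 l hl)
  set Lv := L.filter (fun l => l.b = 0) with hLv
  set Lr := L.filter (fun l => ¬ l.b = 0) with hLr
  set Lh := Lr.filter (fun l => l.a = 0) with hLh
  set Ls := Lr.filter (fun l => ¬ l.a = 0) with hLs
  have h1 : Lh + Ls = Lr := Multiset.filter_add_not _ Lr
  have h2 : Lv + Lr = L := Multiset.filter_add_not _ L
  have hsplit : L = Lv + (Lh + Ls) := by rw [h1, h2]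
  have hLvmem : ∀ l ∈ Lv, l ∈ L ∧ l.b = 0 := fun l hl => Multiset.mem_filter.1 hl
  have hLhmem : ∀ l ∈ Lh, l ∈ L ∧ l.a = 0 := by
    intro l hl
    have := Multiset.mem_filter.1 hl
    exact ⟨(Multiset.mem_filter.1 this.1).1, this.2⟩
  have hLsmem : ∀ l ∈ Ls, l ∈ L ∧ l.a ≠ 0 ∧ l.b ≠ 0 := by
    intro l hl
    have := Multiset.mem_filter.1 hl
    have := And.intro (Multiset.mem_filter.1 this.1) this.2
    exact ⟨this.1.1, this.2, this.1.2⟩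
  refine ⟨Lv.card, Lh.card, Ls.card, by rw [hsplit]; simp [Multiset.card_add]; ring, ?_, ?_⟩
  · -- axis inequality
    have hA : ∀ p ∈ AF n, k ≤ (L.filter (fun l => l.Mem p)).card := by
      intro p hp
      have hmem : p ∈ (↑(expSet n ×ˢ expSet n) : Set (ℝ×ℝ)) ∧ p ≠ (0,0) := by
        rw [AF, Finset.mem_union] at hp
        constructor
        · rw [Finset.mem_coe, Finset.mem_product]
          rcases hp with hp | hp
          · obtain ⟨x, hx, rfl⟩ := Finset.mem_image.1 hp
            obtain ⟨i, hi, rfl⟩ := mem_Ey.1 hx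
            constructor
            · exact Finset.mem_insert_of_mem (Finset.mem_image.2 ⟨i, Finset.mem_range.2 hi, rfl⟩)
            · exact Finset.mem_insert_self _ _
          · obtain ⟨y, hy, rfl⟩ := Finset.mem_image.1 hp
            obtain ⟨i, hi, rfl⟩ := mem_Ey.1 hy
            constructor
            · exact Finset.mem_insert_self _ _
            · exact Finset.mem_insert_of_mem (Finset.mem_image.2 ⟨i, Finset.mem_range.2 hi, rfl⟩)
        · rcases hp with hp | hp
          · obtain ⟨x, hx, rfl⟩ := Finset.mem_image.1 hp
            intro hcon
            have := (Prod.ext_iff.1 hcon).1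
            exact (Ey_pos hx).ne' this
          · obtain ⟨y, hy, rfl⟩ := Finset.mem_image.1 hp
            intro hcon
            have := (Prod.ext_iff.1 hcon).2
            exact (Ey_pos hy).ne' this
      exact hcov p hmem.1 hmem.2
    have step1 : k * (2*(n-1)) ≤ ∑ p ∈ AF n, (L.filter (fun l => l.Mem p)).card := by
      calc k * (2*(n-1)) = ∑ _p ∈ AF n, k := by
            rw [Finset.sum_const, smul_eq_mul, AF_card]; ring
        _ ≤ _ := Finset.sum_le_sum hA
    rw [count_swap] at step1
    rw [hsplit, Multiset.map_add, Multiset.map_add, Multiset.sum_add, Multiset.sum_add] at step1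
    have bv : (Lv.map (fun l => ((AF n).filter (fun p => l.Mem p)).card)).sum ≤ Lv.card * 1 := by
      apply sum_filter_le
      intro l hl
      obtain ⟨hlL, hb⟩ := hLvmem l hl
      calc ((AF n).filter (fun p => l.Mem p)).card ≤ _ := axis_union_card n
        _ ≤ 1 + 0 := by
            apply Nat.add_le_add (axis_x_le_one (hcne l hlL) n)
            rw [axis_y_vert (hcne l hlL) hb n]
        _ = 1 := rfl
    have bh : (Lh.map (fun l => ((AF n).filter (fun p => l.Mem p)).card)).sum ≤ Lh.card * 1 := by
      apply sum_filter_le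
      intro l hl
      obtain ⟨hlL, ha⟩ := hLhmem l hl
      calc ((AF n).filter (fun p => l.Mem p)).card ≤ _ := axis_union_card n
        _ ≤ 0 + 1 := by
            apply Nat.add_le_add _ (axis_y_le_one (hcne l hlL) n)
            rw [axis_x_horiz (hcne l hlL) ha n]
        _ = 1 := rfl
    have bs : (Ls.map (fun l => ((AF n).filter (fun p => l.Mem p)).card)).sum ≤ Ls.card * 2 := by
      apply sum_filter_le
      intro l hl
      obtain ⟨hlL, -, -⟩ := hLsmem l hl
      calc ((AF n).filter (fun p => l.Mem p)).card ≤ _ := axis_union_card n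
        _ ≤ 1 + 1 := Nat.add_le_add (axis_x_le_one (hcne l hlL) n) (axis_y_le_one (hcne l hlL) n)
    omega
  · -- interior inequality
    have hB : ∀ p ∈ BF n, k ≤ (L.filter (fun l => l.Mem p)).card := by
      intro p hp
      rw [BF, Finset.mem_product] at hp
      apply hcov
      · rw [Finset.mem_coe, Finset.mem_product]
        constructor
        · obtain ⟨i, hi, hx⟩ := mem_Ey.1 hp.1
          exact Finset.mem_insert_of_mem (Finset.mem_image.2 ⟨i, Finset.mem_range.2 hi, hx⟩)
        · obtain ⟨i, hi, hx⟩ := mem_Ey.1 hp.2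
          exact Finset.mem_insert_of_mem (Finset.mem_image.2 ⟨i, Finset.mem_range.2 hi, hx⟩)
      · intro hcon
        have := (Prod.ext_iff.1 hcon).1
        exact (Ey_pos hp.1).ne' this
    have step1 : k * ((n-1)*(n-1)) ≤ ∑ p ∈ BF n, (L.filter (fun l => l.Mem p)).card := by
      calc k * ((n-1)*(n-1)) = ∑ _p ∈ BF n, k := by
            rw [Finset.sum_const, smul_eq_mul, BF_card]; ring
        _ ≤ _ := Finset.sum_le_sum hB
    rw [count_swap] at step1
    rw [hsplit, Multiset.map_add, Multiset.map_add, Multiset.sum_add, Multiset.sum_add] at step1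
    have bv : (Lv.map (fun l => ((BF n).filter (fun p => l.Mem p)).card)).sum ≤ Lv.card * (n-1) := by
      apply sum_filter_le
      intro l hl
      exact int_vert (hLvmem l hl).2 n
    have bh : (Lh.map (fun l => ((BF n).filter (fun p => l.Mem p)).card)).sum ≤ Lh.card * (n-1) := by
      apply sum_filter_le
      intro l hl
      exact int_horiz (hLhmem l hl).2 n
    have bs : (Ls.map (fun l => ((BF n).filter (fun p => l.Mem p)).card)).sum ≤ Ls.card * 2 := by
      apply sum_filter_le
      intro l hl
      obtain ⟨hlL, ha, hb⟩ := hLsmem l hl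
      exact int_slant (hcne l hlL) ha hb n
    have expand : (Lv.card + Lh.card) * (n-1) = Lv.card * (n-1) + Lh.card * (n-1) := by ring
    omega

theorem stmt12 :
    ∀ ε : ℝ, 0 < ε → ∃ N : ℕ, ∀ n : ℕ, N ≤ n → ∀ k : ℕ, N ≤ k →
      (3 / 2 - ε) * ((k : ℝ) * ((n : ℝ) - 1)) ≤ (cov (↑(expSet n ×ˢ expSet n)) k : ℝ) ∧
      (cov (↑(expSet n ×ˢ expSet n)) k : ℝ) ≤ (3 / 2 + ε) * ((k : ℝ) * ((n : ℝ) - 1)) := by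
  intro ε hε
  refine ⟨⌈3/ε⌉₊ + 3, ?_⟩
  intro n hn k hk
  have hceil : (3:ℝ)/ε ≤ (⌈3/ε⌉₊ : ℝ) := Nat.le_ceil _
  have hn3 : 3 ≤ n := le_trans (by omega) hn
  have hk1 : 1 ≤ k := le_trans (by omega) hk
  have hnR : (3:ℝ)/ε + 3 ≤ (n:ℝ) := by
    have : ((⌈3/ε⌉₊ + 3 : ℕ) : ℝ) ≤ (n:ℝ) := Nat.cast_le.2 hn
    push_cast at this
    linarith
  have hkR : (3:ℝ)/ε ≤ (k:ℝ) := by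
    have : ((⌈3/ε⌉₊ + 3 : ℕ) : ℝ) ≤ (k:ℝ) := Nat.cast_le.2 hk
    push_cast at this
    linarith
  have h3e : ε * (3/ε) = 3 := by field_simp
  have h3epos : (0:ℝ) < 3/ε := by positivity
  set d : ℝ := (n:ℝ) - 1 with hdd
  have hdcast : ((n-1 : ℕ) : ℝ) = d := by
    rw [hdd, Nat.cast_sub (by omega : 1 ≤ n)]; simp
  have hd3 : 3/ε + 2 ≤ d := by rw [hdd]; linarith
  have hd0 : (0:ℝ) ≤ d := by linarith
  have hkk : (0:ℝ) ≤ (k:ℝ) := Nat.cast_nonneg k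
  have hεk : 3 ≤ ε * k := by
    calc (3:ℝ) = ε * (3/ε) := h3e.symm
      _ ≤ ε * k := by apply mul_le_mul_of_nonneg_left hkR (le_of_lt hε)
  have hεd : 3 ≤ ε * (d-1) := by
    calc (3:ℝ) = ε * (3/ε) := h3e.symm
      _ ≤ ε * (d-1) := by apply mul_le_mul_of_nonneg_left (by linarith) (le_of_lt hε)
  constructor
  · -- lower bound
    have hne : {m | ∃ L : Multiset Line2, IsKCover (↑(expSet n ×ˢ expSet n)) k L ∧
        Multiset.card L = m}.Nonempty :=
      ⟨_, UB n ((k+1)/2), UB_isKCover n k (by omega), rfl⟩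
    have hmem := Nat.sInf_mem hne
    obtain ⟨L, hL, hcard⟩ := hmem
    obtain ⟨V, H, S, hVHS, I1, I2⟩ := master n k L hL
    have hcovR : (cov (↑(expSet n ×ˢ expSet n)) k : ℝ) = (V:ℝ) + H + S := by
      rw [cov, ← hcard, hVHS]; push_cast; ring
    rw [hcovR]
    have I1R : (k:ℝ) * (2*d) ≤ (V:ℝ) + H + 2*S := by
      have := (Nat.cast_le (α := ℝ)).2 I1
      push_cast at this
      rw [hdcast] at this
      linarith
    have I2R : (k:ℝ) * (d*d) ≤ ((V:ℝ) + H) * d + 2*S := by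
      have := (Nat.cast_le (α := ℝ)).2 I2
      push_cast at this
      rw [hdcast] at this
      linarith
    have hp1 : (d-2) * ((k:ℝ)*(2*d)) ≤ (d-2)*((V:ℝ)+H+2*S) :=
      mul_le_mul_of_nonneg_left I1R (by linarith)
    have key : (k:ℝ)*d*(3*d-4) ≤ (2*d-2)*((V:ℝ)+H+S) := by linarith [hp1, I2R]
    have haux2 : (0:ℝ) ≤ (k:ℝ)*d*(2*ε*(d-1)-1) :=
      mul_nonneg (mul_nonneg hkk hd0) (by linarith)
    have e1 : (3/2-ε)*((k:ℝ)*d)*(2*d-2) = (k:ℝ)*d*(3*d-4) - (k:ℝ)*d*(2*ε*(d-1)-1) := by ring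
    have e2 : ((V:ℝ)+H+S)*(2*d-2) = (2*d-2)*((V:ℝ)+H+S) := by ring
    have hfin : (3/2-ε)*((k:ℝ)*d)*(2*d-2) ≤ ((V:ℝ)+H+S)*(2*d-2) := by
      rw [e1, e2]; linarith [key, haux2]
    have h2dpos : (0:ℝ) < 2*d-2 := by linarith
    exact le_of_mul_le_mul_right hfin h2dpos
  · -- upper bound
    have hub : cov (↑(expSet n ×ˢ expSet n)) k ≤ (n-1) * (3*((k+1)/2)) := by
      apply Nat.sInf_le
      exact ⟨UB n ((k+1)/2), UB_isKCover n k (by omega), UB_card n _⟩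
    have hubR : (cov (↑(expSet n ×ˢ expSet n)) k : ℝ) ≤ ((n-1:ℕ):ℝ) * (3*(((k+1)/2 : ℕ):ℝ)) := by
      have := (Nat.cast_le (α := ℝ)).2 hub
      push_cast at this
      push_cast
      linarith
    have hm : 2*((((k+1)/2 : ℕ)):ℝ) ≤ (k:ℝ)+1 := by
      have : ((k+1)/2) * 2 ≤ k+1 := Nat.div_mul_le_self (k+1) 2
      have := (Nat.cast_le (α := ℝ)).2 this
      push_cast at this
      linarith
    rw [hdcast] at hubR
    calc (cov (↑(expSet n ×ˢ expSet n)) k : ℝ) ≤ d * (3*(((k+1)/2 : ℕ):ℝ)) := hubR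
      _ ≤ d * ((3/2+ε)*k) := by
          apply mul_le_mul_of_nonneg_left _ hd0
          linarith [hm, hεk]
      _ = (3/2+ε) * ((k:ℝ) * d) := by ring
end
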